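/- arXiv:1608.07022 — 10 statements merged into one kernel-verified Lean document; each statement's English description precedes it below -/
import Mathlib

section
/- Let G be a simple undirected graph and let v be a vertex dominated by a neighbor u (i.e., u is adjacent to v and every neighbor of u is adjacent to v or equals v). If there exists a minimum 3-path vertex cover of G not containing v, then there exists a minimum 3-path vertex cover C' of G such that v ∉ C', u ∉ C', and N({u,v}) ⊆ C'. -/
open Finset

variable {V : Type*}

def IsP3VC (G : SimpleGraph V) (C : Finset V) : Prop :=
  ∀ a b c : V, G.Adj a b → G.Adj b c → a ≠ c → a ∈ C ∨ b ∈ C ∨ c ∈ C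

def IsMinP3VC (G : SimpleGraph V) (C : Finset V) : Prop :=
  IsP3VC G C ∧ ∀ D : Finset V, IsP3VC G D → C.card ≤ D.card

def NSet [Fintype V] [DecidableEq V] (G : SimpleGraph V) [DecidableRel G.Adj]
    (S : Finset V) : Finset V :=
  Finset.univ.filter (fun w => w ∉ S ∧ ∃ x ∈ S, G.Adj w x)

/-!
Take a minimum cover `C` with `v ∉ C` and replace its part in `{u, v}` by `N({u, v})`.
Since `{u, v}` spans no 3-path, the result is again a cover. By domination
`N({u, v}) ⊆ N(v)`, and at most one neighbour of `v` lies outside `C` (two of them would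
form a 3-path through `v`). If `u ∈ C`, we trade `u` for at most one new vertex; if `u ∉ C`,
then `u` is that one neighbour, so `N({u, v}) ⊆ C` already. Either way the cover does not grow.
-/

theorem card_sdiff_union_le [DecidableEq V] {C S N : Finset V} (hNS : Disjoint N S)
    (h : #(N \ C) ≤ #(C ∩ S)) : #(C \ S ∪ N) ≤ #C :=
  calc #(C \ S ∪ N) ≤ #(C \ S ∪ N \ C) := by
        refine card_le_card (union_subset subset_union_left fun x hxN => ?_)
        by_cases hxC : x ∈ C
        · exact mem_union_left _ (mem_sdiff.2 ⟨hxC, disjoint_left.1 hNS hxN⟩)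
        · exact mem_union_right _ (mem_sdiff.2 ⟨hxN, hxC⟩)
    _ ≤ #(C \ S) + #(N \ C) := card_union_le _ _
    _ ≤ #(C \ S) + #(C ∩ S) := Nat.add_le_add_left h _
    _ = #C := card_sdiff_add_card_inter C S

section

variable [Fintype V] [DecidableEq V] {G : SimpleGraph V} [DecidableRel G.Adj]

@[simp]
theorem mem_NSet {S : Finset V} {w : V} :
    w ∈ NSet G S ↔ w ∉ S ∧ ∃ x ∈ S, G.Adj w x := by
  simp [NSet]

theorem disjoint_NSet (S : Finset V) : Disjoint (NSet G S) S :=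
  disjoint_left.2 fun _ hw => (mem_NSet.1 hw).1

/-- `IsP3VC G Sᶜ` says that `S` contains no 3-path of `G`. -/
theorem IsP3VC.sdiff_union_NSet {C S : Finset V} (hC : IsP3VC G C) (hS : IsP3VC G Sᶜ) :
    IsP3VC G (C \ S ∪ NSet G S) := by
  intro a b c hab hbc hac
  have hN : ∀ {x y}, G.Adj x y → x ∉ S → y ∈ S → x ∈ C \ S ∪ NSet G S :=
    fun hxy hx hy => mem_union_right _ (mem_NSet.2 ⟨hx, _, hy, hxy⟩)
  by_cases haS : a ∈ S <;> by_cases hbS : b ∈ S <;> by_cases hcS : c ∈ S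
  · simpa [haS, hbS, hcS] using hS a b c hab hbc hac
  · exact .inr (.inr (hN hbc.symm hcS hbS))
  · exact .inr (.inl (hN hab.symm hbS haS))
  · exact .inr (.inl (hN hab.symm hbS haS))
  · exact .inl (hN hab haS hbS)
  · exact .inl (hN hab haS hbS)
  · exact .inr (.inl (hN hbc hbS hcS))
  · rcases hC a b c hab hbc hac with h | h | h
    · exact .inl (mem_union_left _ (mem_sdiff.2 ⟨h, haS⟩))
    · exact .inr (.inl (mem_union_left _ (mem_sdiff.2 ⟨h, hbS⟩)))
    · exact .inr (.inr (mem_union_left _ (mem_sdiff.2 ⟨h, hcS⟩)))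

omit [DecidableRel G.Adj] in
theorem isP3VC_compl_pair (u v : V) : IsP3VC G ({u, v}ᶜ : Finset V) := by
  intro a b c hab hbc hac
  by_contra! h
  simp only [mem_compl, mem_insert, mem_singleton, not_not] at h
  have hba := hab.ne'
  have hbc' := hbc.ne
  obtain ⟨ha | ha, hb | hb, hc | hc⟩ := h <;> simp_all

theorem IsP3VC.card_neighborFinset_sdiff_le_one {C : Finset V} (hC : IsP3VC G C) {v : V}
    (hv : v ∉ C) : #(G.neighborFinset v \ C) ≤ 1 := by
  refine card_le_one.2 fun a ha b hb => by_contra fun hab => ?_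
  simp only [mem_sdiff, SimpleGraph.mem_neighborFinset] at ha hb
  rcases hC a v b ha.1.symm hb.1 hab with h | h | h
  exacts [ha.2 h, hv h, hb.2 h]

theorem NSet_pair_subset_neighborFinset {u v : V}
    (hdom : ∀ w : V, G.Adj u w → w = v ∨ G.Adj v w) :
    NSet G {u, v} ⊆ G.neighborFinset v := by
  intro w hw
  simp only [mem_NSet, mem_insert, mem_singleton, not_or, exists_eq_or_imp, exists_eq_left]
    at hw
  obtain ⟨⟨-, hwv⟩, hwu | hwv'⟩ := hw
  · simpa [hwv] using hdom w hwu.symm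
  · simpa using hwv'.symm

theorem card_NSet_pair_sdiff_le {C : Finset V} (hC : IsP3VC G C) {u v : V} (hadj : G.Adj u v)
    (hdom : ∀ w : V, G.Adj u w → w = v ∨ G.Adj v w) (hv : v ∉ C) :
    #(NSet G {u, v} \ C) ≤ #(C ∩ {u, v}) := by
  have hsub : NSet G {u, v} \ C ⊆ G.neighborFinset v \ C :=
    sdiff_subset_sdiff (NSet_pair_subset_neighborFinset hdom) le_rfl
  by_cases hu : u ∈ C
  · calc #(NSet G {u, v} \ C) ≤ 1 :=
          (card_le_card hsub).trans (hC.card_neighborFinset_sdiff_le_one hv)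
      _ ≤ #(C ∩ {u, v}) := card_pos.2 ⟨u, by simp [hu]⟩
  · suffices NSet G {u, v} \ C = ∅ by simp [this]
    refine eq_empty_of_forall_notMem fun w hw => ?_
    have huN : u ∈ G.neighborFinset v \ C := by simp [hu, hadj.symm]
    have hwu : w = u := card_le_one.1 (hC.card_neighborFinset_sdiff_le_one hv) w (hsub hw) u huN
    simp [hwu] at hw

end

/-- if `v` is dominated by its neighbor `u` and some minimum
3-path vertex cover avoids `v`, then some minimum 3-path vertex cover `C'`
avoids both `u` and `v` and contains `N({u,v})`. -/
theorem stmt0 [Fintype V] [DecidableEq V] (G : SimpleGraph V) [DecidableRel G.Adj]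
    (u v : V) (hadj : G.Adj u v)
    (hdom : ∀ w : V, G.Adj u w → w = v ∨ G.Adj v w)
    (hex : ∃ C : Finset V, IsMinP3VC G C ∧ v ∉ C) :
    ∃ C' : Finset V, IsMinP3VC G C' ∧ v ∉ C' ∧ u ∉ C' ∧ NSet G {u, v} ⊆ C' := by
  obtain ⟨C, ⟨hC, hCmin⟩, hv⟩ := hex
  have hcover : IsP3VC G (C \ {u, v} ∪ NSet G {u, v}) :=
    hC.sdiff_union_NSet (isP3VC_compl_pair u v)
  have hcard : #(C \ {u, v} ∪ NSet G {u, v}) ≤ #C :=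
    card_sdiff_union_le (disjoint_NSet _) (card_NSet_pair_sdiff_le hC hadj hdom hv)
  refine ⟨_, ⟨hcover, fun D hD => hcard.trans (hCmin D hD)⟩, ?_, ?_, subset_union_right⟩ <;>
    simp
end

section
/- Let G be a simple undirected graph and v a vertex not dominated by any other vertex. Suppose v has a satellite, i.e., there exist a neighbor p of v and a vertex s at distance 2 from v with N[p] \ N[v] = {s}. Then there exists a minimum 3-path vertex cover C of G such that either v ∈ C, or there is a neighbor u of v with v ∉ C and u ∉ C. -/
/-!
Take any minimum 3-path vertex cover `C`. If `v ∈ C`, or some neighbour of `v` lies outside `C`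
together with `v`, we are done. Otherwise `N(v) ⊆ C`, in particular the satellite's partner `p`
lies in `C`. Since every neighbour of `p` is `v`, the satellite `s`, or a neighbour of `v`, each
3-path through `p` meets `N(v) \ {p}` or `s`; so exchanging `p` for `s` yields a cover of no larger
size that avoids both `v` and `p`.
-/

open Finset

variable {V : Type*}

/-- closed neighborhood as a finset -/
def CN [Fintype V] [DecidableEq V] (G : SimpleGraph V) [DecidableRel G.Adj] (v : V) :
    Finset V := insert v (G.neighborFinset v)

theorem exists_isMinP3VC [Fintype V] (G : SimpleGraph V) : ∃ C : Finset V, IsMinP3VC G C := by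
  classical
  obtain ⟨C, hC, hmin⟩ := exists_min_image (univ.powerset.filter (IsP3VC G)) card
    ⟨univ, by simp [IsP3VC]⟩
  exact ⟨C, (mem_filter.1 hC).2, fun D hD => hmin D (by simpa using hD)⟩

theorem IsMinP3VC.of_card_le {G : SimpleGraph V} {C D : Finset V} (hC : IsMinP3VC G C)
    (hD : IsP3VC G D) (hcard : D.card ≤ C.card) : IsMinP3VC G D :=
  ⟨hD, fun E hE => hcard.trans (hC.2 E hE)⟩

theorem adj_of_CN_sdiff_eq_singleton [Fintype V] [DecidableEq V] {G : SimpleGraph V}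
    [DecidableRel G.Adj] {v p s x : V} (hps : CN G p \ CN G v = {s}) (hpx : G.Adj p x) :
    x = s ∨ x = v ∨ G.Adj v x := by
  by_cases hx : x ∈ CN G v
  · simp only [CN, mem_insert, SimpleGraph.mem_neighborFinset] at hx
    exact Or.inr hx
  · have : x ∈ CN G p \ CN G v := mem_sdiff.2 ⟨by simp [CN, hpx], hx⟩
    exact Or.inl (by simpa [hps] using this)

theorem IsP3VC.insert_erase [DecidableEq V] {G : SimpleGraph V} {C : Finset V} {v p s : V}
    (hC : IsP3VC G C) (hp : ∀ x, G.Adj p x → x = s ∨ x = v ∨ G.Adj v x)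
    (hN : ∀ u, G.Adj v u → u ∈ C) : IsP3VC G (insert s (C.erase p)) := by
  have hmem : ∀ x, x ∈ C → x ≠ p → x ∈ insert s (C.erase p) :=
    fun x hx hxp => mem_insert_of_mem (mem_erase.2 ⟨hxp, hx⟩)
  -- a neighbour of `p` other than `s` and `v` is a neighbour of `v`, hence stays in the cover
  have hnbr : ∀ x, G.Adj p x → x ≠ v → x ∈ insert s (C.erase p) := by
    intro x hpx hxv
    rcases hp x hpx with rfl | rfl | hvx
    · exact mem_insert_self _ _
    · exact absurd rfl hxv
    · exact hmem x (hN x hvx) (G.ne_of_adj hpx).symm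
  intro a b c hab hbc hac
  by_cases hap : a = p
  · subst hap
    by_cases hbv : b = v
    · subst hbv
      exact Or.inr (Or.inr (hmem c (hN c hbc) (Ne.symm hac)))
    · exact Or.inr (Or.inl (hnbr b hab hbv))
  by_cases hcp : c = p
  · subst hcp
    by_cases hbv : b = v
    · subst hbv
      exact Or.inl (hmem a (hN a hab.symm) hac)
    · exact Or.inr (Or.inl (hnbr b hbc.symm hbv))
  by_cases hbp : b = p
  · subst hbp
    by_cases hav : a = v
    · exact Or.inr (Or.inr (hnbr c hbc (hav ▸ hac).symm))
    · exact Or.inl (hnbr a hab.symm hav)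
  rcases hC a b c hab hbc hac with h | h | h
  · exact Or.inl (hmem a h hap)
  · exact Or.inr (Or.inl (hmem b h hbp))
  · exact Or.inr (Or.inr (hmem c h hcp))

theorem card_insert_erase_le [DecidableEq V] {C : Finset V} {p : V} (hp : p ∈ C) (s : V) :
    (insert s (C.erase p)).card ≤ C.card :=
  (card_insert_le _ _).trans (card_erase_add_one hp).le

theorem stmt1_general [Fintype V] [DecidableEq V] (G : SimpleGraph V) [DecidableRel G.Adj]
    (v : V)
    (hsat : ∃ p s : V, G.Adj v p ∧ s ∉ CN G v ∧ CN G p \ CN G v = {s}) :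
    ∃ C : Finset V, IsMinP3VC G C ∧
      (v ∈ C ∨ ∃ u : V, G.Adj v u ∧ v ∉ C ∧ u ∉ C) := by
  obtain ⟨p, s, hvp, hsv, hps⟩ := hsat
  obtain ⟨C, hC⟩ := exists_isMinP3VC G
  by_cases hv : v ∈ C
  · exact ⟨C, hC, Or.inl hv⟩
  by_cases hN : ∀ u, G.Adj v u → u ∈ C
  · have hsv' : s ≠ v ∧ ¬G.Adj v s := by simpa [CN] using hsv
    have hsp : s ≠ p := by rintro rfl; exact hsv'.2 hvp
    refine ⟨insert s (C.erase p), hC.of_card_le ?_ (card_insert_erase_le (hN p hvp) s),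
      Or.inr ⟨p, hvp, ?_, ?_⟩⟩
    · exact hC.1.insert_erase (fun _ => adj_of_CN_sdiff_eq_singleton hps) hN
    · simp [hsv'.1.symm, hv]
    · simp [hsp.symm]
  · push Not at hN
    obtain ⟨u, hvu, hu⟩ := hN
    exact ⟨C, hC, Or.inr ⟨u, hvu, hv, hu⟩⟩

/-- if `v` is not dominated by any other vertex and has a
satellite, then some minimum 3-path vertex cover `C` either contains `v`, or
avoids `v` together with one of its neighbors. -/
theorem stmt1 [Fintype V] [DecidableEq V] (G : SimpleGraph V) [DecidableRel G.Adj]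
    (v : V)
    (hnodom : ¬ ∃ u : V, u ≠ v ∧ G.Adj u v ∧ ∀ w : V, G.Adj u w → w = v ∨ G.Adj v w)
    (hsat : ∃ p s : V, G.Adj v p ∧ s ∉ CN G v ∧ CN G p \ CN G v = {s}) :
    ∃ C : Finset V, IsMinP3VC G C ∧
      (v ∈ C ∨ ∃ u : V, G.Adj v u ∧ v ∉ C ∧ u ∉ C) :=
  stmt1_general G v hsat
end

section
/- Let G be a simple undirected graph and v a vertex of degree 3 with neighbors u1, u2, u3, where u1 has degree 1 and u2 is adjacent to u3. Then there exists a minimum 3-path vertex cover C of G such that either C ∩ {u1, v} = ∅ or C ∩ {u1, u2, u3} = ∅. -/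
open Finset

variable {V : Type*}

/-- for a degree-3 vertex `v` with a degree-1 neighbor `u1` and two
adjacent neighbors `u2`, `u3`, some minimum 3-path vertex cover `C` satisfies
`C ∩ {u1, v} = ∅` or `C ∩ {u1, u2, u3} = ∅`. -/
theorem stmt2 [Fintype V] [DecidableEq V] (G : SimpleGraph V) [DecidableRel G.Adj]
    (v u1 u2 u3 : V)
    (hdeg : G.degree v = 3)
    (hnbrs : G.neighborFinset v = {u1, u2, u3})
    (hdeg1 : G.degree u1 = 1)
    (h23 : G.Adj u2 u3) :
    ∃ C : Finset V, IsMinP3VC G C ∧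
      (C ∩ ({u1, v} : Finset V) = ∅ ∨ C ∩ ({u1, u2, u3} : Finset V) = ∅) := by
  classical
  have hmem : ∀ x, G.Adj v x ↔ x ∈ ({u1, u2, u3} : Finset V) := fun x => by
    rw [← SimpleGraph.mem_neighborFinset, hnbrs]
  have hadj1 : G.Adj v u1 := (hmem u1).2 (by simp)
  have hadj2 : G.Adj v u2 := (hmem u2).2 (by simp)
  have hadj3 : G.Adj v u3 := (hmem u3).2 (by simp)
  have hu1 : ∀ x, G.Adj u1 x → x = v := by
    intro x hx
    have hcard : (G.neighborFinset u1).card = 1 := by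
      rw [SimpleGraph.card_neighborFinset_eq_degree]; exact hdeg1
    obtain ⟨a, ha⟩ := Finset.card_eq_one.mp hcard
    have hv : v ∈ G.neighborFinset u1 := by
      rw [SimpleGraph.mem_neighborFinset]; exact hadj1.symm
    have hx' : x ∈ G.neighborFinset u1 := by
      rw [SimpleGraph.mem_neighborFinset]; exact hx
    rw [ha, Finset.mem_singleton] at hv hx'
    rw [hx', ← hv]
  have h12 : u1 ≠ u2 := by
    rintro rfl
    have h := hu1 u3 h23
    rw [h] at hadj3
    exact G.irrefl hadj3
  have h13 : u1 ≠ u3 := by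
    rintro rfl
    have h := hu1 u2 h23.symm
    rw [h] at hadj2
    exact G.irrefl hadj2
  have hv1 : v ≠ u1 := hadj1.ne
  have hv2 : v ≠ u2 := hadj2.ne
  have hv3 : v ≠ u3 := hadj3.ne
  have h23n : u2 ≠ u3 := h23.ne
  obtain ⟨C0, hC0mem, hC0min⟩ := Finset.exists_min_image
    (Finset.univ.filter fun D : Finset V => IsP3VC G D) Finset.card
    ⟨Finset.univ, Finset.mem_filter.mpr ⟨Finset.mem_univ _, fun a _ _ _ _ _ => Or.inl (Finset.mem_univ a)⟩⟩
  simp only [Finset.mem_filter, Finset.mem_univ, true_and] at hC0mem hC0min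
  -- build C1, a cover of card ≤ C0.card with u1 ∉ C1
  obtain ⟨C1, hC1cov, hC1card, hC1u1⟩ :
      ∃ C1 : Finset V, IsP3VC G C1 ∧ C1.card ≤ C0.card ∧ u1 ∉ C1 := by
    by_cases h : u1 ∈ C0
    · refine ⟨insert v (C0.erase u1), ?_, ?_, ?_⟩
      · intro a b c hab hbc hac
        rcases hC0mem a b c hab hbc hac with ha | hb | hc
        · by_cases hau : a = u1
          · subst hau
            right; left
            rw [hu1 b hab]
            exact Finset.mem_insert_self _ _
          · exact Or.inl (Finset.mem_insert_of_mem (Finset.mem_erase.mpr ⟨hau, ha⟩))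
        · by_cases hbu : b = u1
          · subst hbu
            exact absurd ((hu1 a hab.symm).trans (hu1 c hbc).symm) hac
          · exact Or.inr (Or.inl (Finset.mem_insert_of_mem (Finset.mem_erase.mpr ⟨hbu, hb⟩)))
        · by_cases hcu : c = u1
          · subst hcu
            right; left
            rw [hu1 b hbc.symm]
            exact Finset.mem_insert_self _ _
          · exact Or.inr (Or.inr (Finset.mem_insert_of_mem (Finset.mem_erase.mpr ⟨hcu, hc⟩)))
      · calc (insert v (C0.erase u1)).card ≤ (C0.erase u1).card + 1 :=
              Finset.card_insert_le _ _
          _ = C0.card - 1 + 1 := by rw [Finset.card_erase_of_mem h]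
          _ = C0.card := Nat.succ_pred_eq_of_pos (Finset.card_pos.mpr ⟨u1, h⟩)
      · intro hmem'
        rcases Finset.mem_insert.mp hmem' with h' | h'
        · exact hv1 h'.symm
        · exact (Finset.mem_erase.mp h').1 rfl
    · exact ⟨C0, hC0mem, le_refl _, h⟩
  have hC1min : IsMinP3VC G C1 := ⟨hC1cov, fun D hD => hC1card.trans (hC0min D hD)⟩
  by_cases hvC : v ∈ C1
  · by_cases h2C : u2 ∈ C1 ∨ u3 ∈ C1
    · -- replace v by u2, u3
      set C2 := insert u2 (insert u3 (C1.erase v)) with hC2def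
      have hcov2 : IsP3VC G C2 := by
        intro a b c hab hbc hac
        have hsub : C1.erase v ⊆ C2 := by
          intro x hx
          exact Finset.mem_insert_of_mem (Finset.mem_insert_of_mem hx)
        have hu2C : u2 ∈ C2 := Finset.mem_insert_self _ _
        have hu3C : u3 ∈ C2 := Finset.mem_insert_of_mem (Finset.mem_insert_self _ _)
        rcases hC1cov a b c hab hbc hac with ha | hb | hc
        · by_cases hav : a = v
          · subst hav
            have hb3 : b ∈ ({u1, u2, u3} : Finset V) := (hmem b).1 hab
            simp only [Finset.mem_insert, Finset.mem_singleton] at hb3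
            rcases hb3 with rfl | rfl | rfl
            · exact absurd (hu1 c hbc).symm hac
            · exact Or.inr (Or.inl hu2C)
            · exact Or.inr (Or.inl hu3C)
          · exact Or.inl (hsub (Finset.mem_erase.mpr ⟨hav, ha⟩))
        · by_cases hbv : b = v
          · subst hbv
            have ha3 : a ∈ ({u1, u2, u3} : Finset V) := (hmem a).1 hab.symm
            have hc3 : c ∈ ({u1, u2, u3} : Finset V) := (hmem c).1 hbc
            simp only [Finset.mem_insert, Finset.mem_singleton] at ha3 hc3
            rcases ha3 with rfl | rfl | rfl
            · rcases hc3 with rfl | rfl | rfl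
              · exact absurd rfl hac
              · exact Or.inr (Or.inr hu2C)
              · exact Or.inr (Or.inr hu3C)
            · exact Or.inl hu2C
            · exact Or.inl hu3C
          · exact Or.inr (Or.inl (hsub (Finset.mem_erase.mpr ⟨hbv, hb⟩)))
        · by_cases hcv : c = v
          · subst hcv
            have hb3 : b ∈ ({u1, u2, u3} : Finset V) := (hmem b).1 hbc.symm
            simp only [Finset.mem_insert, Finset.mem_singleton] at hb3
            rcases hb3 with rfl | rfl | rfl
            · exact absurd (hu1 a hab.symm) hac
            · exact Or.inr (Or.inl hu2C)
            · exact Or.inr (Or.inl hu3C)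
          · exact Or.inr (Or.inr (hsub (Finset.mem_erase.mpr ⟨hcv, hc⟩)))
      have hcard2 : C2.card ≤ C1.card := by
        have herase : (C1.erase v).card = C1.card - 1 := Finset.card_erase_of_mem hvC
        have hpos : 1 ≤ C1.card := Finset.card_pos.mpr ⟨v, hvC⟩
        rcases h2C with h2 | h3
        · have hmem2 : u2 ∈ insert u3 (C1.erase v) :=
            Finset.mem_insert_of_mem (Finset.mem_erase.mpr ⟨fun h => hv2 h.symm, h2⟩)
          rw [hC2def, Finset.insert_eq_self.mpr hmem2]
          calc (insert u3 (C1.erase v)).card ≤ (C1.erase v).card + 1 :=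
                Finset.card_insert_le _ _
            _ = C1.card - 1 + 1 := by rw [herase]
            _ = C1.card := Nat.succ_pred_eq_of_pos hpos
        · have hmem3 : u3 ∈ C1.erase v := Finset.mem_erase.mpr ⟨fun h => hv3 h.symm, h3⟩
          rw [hC2def, Finset.insert_eq_self.mpr hmem3]
          calc (insert u2 (C1.erase v)).card ≤ (C1.erase v).card + 1 :=
                Finset.card_insert_le _ _
            _ = C1.card - 1 + 1 := by rw [herase]
            _ = C1.card := Nat.succ_pred_eq_of_pos hpos
      refine ⟨C2, ⟨hcov2, fun D hD => hcard2.trans (hC1min.2 D hD)⟩, Or.inl ?_⟩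
      rw [Finset.eq_empty_iff_forall_notMem]
      intro x hx
      rw [Finset.mem_inter] at hx
      obtain ⟨hx1, hx2⟩ := hx
      simp only [Finset.mem_insert, Finset.mem_singleton] at hx2
      rcases hx2 with rfl | rfl
      · -- u1 ∈ C2 is impossible
        rcases Finset.mem_insert.mp hx1 with h' | h'
        · exact h12 h'
        · rcases Finset.mem_insert.mp h' with h'' | h''
          · exact h13 h''
          · exact hC1u1 (Finset.mem_of_mem_erase h'')
      · -- v ∈ C2 is impossible
        rcases Finset.mem_insert.mp hx1 with h' | h'
        · exact hv2 h'
        · rcases Finset.mem_insert.mp h' with h'' | h''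
          · exact hv3 h''
          · exact Finset.notMem_erase _ _ h''
    · push_neg at h2C
      refine ⟨C1, hC1min, Or.inr ?_⟩
      rw [Finset.eq_empty_iff_forall_notMem]
      intro x hx
      rw [Finset.mem_inter] at hx
      obtain ⟨hx1, hx2⟩ := hx
      simp only [Finset.mem_insert, Finset.mem_singleton] at hx2
      rcases hx2 with rfl | rfl | rfl
      · exact hC1u1 hx1
      · exact h2C.1 hx1
      · exact h2C.2 hx1
  · refine ⟨C1, hC1min, Or.inl ?_⟩
    rw [Finset.eq_empty_iff_forall_notMem]
    intro x hx
    rw [Finset.mem_inter] at hx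
    obtain ⟨hx1, hx2⟩ := hx
    simp only [Finset.mem_insert, Finset.mem_singleton] at hx2
    rcases hx2 with rfl | rfl
    · exact hC1u1 hx1
    · exact hvC hx1
end

section
/- Let G be a graph admitting a good decomposition (I, C, R). Then G has a P3-packing of size k if and only if G[R] has a P3-packing of size k − |C|. -/
open Finset

variable {V : Type*}

/-- vertex set of an (ordered) 3-path -/
def TripSet [DecidableEq V] (t : V × V × V) : Finset V := {t.1, t.2.1, t.2.2}

/-- a P3-packing: a collection of vertex-disjoint paths on three vertices -/
def IsP3Packing [DecidableEq V] (G : SimpleGraph V) (P : Finset (V × V × V)) : Prop :=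
  (∀ t ∈ P, G.Adj t.1 t.2.1 ∧ G.Adj t.2.1 t.2.2 ∧ t.1 ≠ t.2.2) ∧
  (∀ t ∈ P, ∀ s ∈ P, t ≠ s → Disjoint (TripSet t) (TripSet s))

/-- `D` is a 3-path vertex cover of the induced subgraph `G[S]` -/
def IsP3VCOn (G : SimpleGraph V) (S D : Finset V) : Prop :=
  ∀ a b c : V, a ∈ S → b ∈ S → c ∈ S → G.Adj a b → G.Adj b c → a ≠ c →
    a ∈ D ∨ b ∈ D ∨ c ∈ D

/-- a good decomposition `(I, C, R)` of `G` -/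
def IsGoodDecomp [Fintype V] [DecidableEq V] (G : SimpleGraph V) [DecidableRel G.Adj]
    (I C R : Finset V) : Prop :=
  (I ∪ C ∪ R = Finset.univ) ∧ Disjoint I C ∧ Disjoint I R ∧ Disjoint C R ∧
  (∀ a ∈ I, (I.filter (fun b => G.Adj a b)).card ≤ 1) ∧
  (∃ P : Finset (V × V × V), IsP3Packing G P ∧ (∀ t ∈ P, TripSet t ⊆ I ∪ C) ∧
    P.card = C.card) ∧
  (∀ a ∈ I, ∀ b ∈ R, ¬ G.Adj a b)

/-! A 3-path of `G` that avoids `C` lies in `I ∪ R`; as no edge joins `I` to `R`, it lies inside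
`I` or inside `R`, and it cannot lie inside `I` because its middle vertex would have two
neighbours there. Hence in any packing of `G` all paths not contained in `R` meet `C`, and being
disjoint there are at most `|C|` of them. Conversely, the packing of `G[I ∪ C]` of size `|C|`
can be added to any packing of `G[R]`. -/

namespace IsP3Packing

variable [DecidableEq V] {G : SimpleGraph V} {P Q : Finset (V × V × V)}

lemma mono (hP : IsP3Packing G P) (hQP : Q ⊆ P) : IsP3Packing G Q :=
  ⟨fun t ht => hP.1 t (hQP ht), fun t ht s hs hne => hP.2 t (hQP ht) s (hQP hs) hne⟩

lemma exists_subset_card_eq (hP : IsP3Packing G P) {k : ℕ} (hk : k ≤ P.card) :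
    ∃ T ⊆ P, IsP3Packing G T ∧ T.card = k := by
  obtain ⟨T, hTP, hT⟩ := Finset.exists_subset_card_eq hk
  exact ⟨T, hTP, hP.mono hTP, hT⟩

lemma union {A B : Finset V} (hP : IsP3Packing G P) (hQ : IsP3Packing G Q)
    (hPA : ∀ t ∈ P, TripSet t ⊆ A) (hQB : ∀ t ∈ Q, TripSet t ⊆ B) (hAB : Disjoint A B) :
    IsP3Packing G (P ∪ Q) := by
  refine ⟨fun t ht => (mem_union.1 ht).elim (hP.1 t) (hQ.1 t), fun t ht s hs hne => ?_⟩
  rcases mem_union.1 ht with ht | ht <;> rcases mem_union.1 hs with hs | hs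
  · exact hP.2 t ht s hs hne
  · exact hAB.mono (hPA t ht) (hQB s hs)
  · exact hAB.symm.mono (hQB t ht) (hPA s hs)
  · exact hQ.2 t ht s hs hne

lemma card_le_of_forall_inter_nonempty {C : Finset V} (hP : IsP3Packing G P)
    (hPC : ∀ t ∈ P, (TripSet t ∩ C).Nonempty) : P.card ≤ C.card :=
  calc P.card ≤ (P.biUnion fun t => TripSet t ∩ C).card :=
        card_le_card_biUnion
          (fun t ht s hs hne => (hP.2 t ht s hs hne).mono inter_subset_left inter_subset_left)
          hPC
    _ ≤ C.card := card_le_card (biUnion_subset.2 fun _ _ => inter_subset_right)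

end IsP3Packing

lemma TripSet.fst_mem [DecidableEq V] (t : V × V × V) : t.1 ∈ TripSet t := by
  simp [TripSet]

lemma disjoint_of_forall_tripSet_subset [DecidableEq V] {P Q : Finset (V × V × V)}
    {A B : Finset V} (hPA : ∀ t ∈ P, TripSet t ⊆ A) (hQB : ∀ t ∈ Q, TripSet t ⊆ B)
    (hAB : Disjoint A B) : Disjoint P Q :=
  disjoint_left.2 fun t htP htQ =>
    disjoint_left.1 hAB (hPA t htP (TripSet.fst_mem t)) (hQB t htQ (TripSet.fst_mem t))

namespace IsGoodDecomp

variable [Fintype V] [DecidableEq V] {G : SimpleGraph V} [DecidableRel G.Adj]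
  {I C R : Finset V}

lemma mem_left_or_mem_right (h : IsGoodDecomp G I C R) {v : V} (hv : v ∉ C) :
    v ∈ I ∨ v ∈ R := by
  have hv' : v ∈ I ∪ C ∪ R := h.1 ▸ mem_univ v
  simp only [mem_union] at hv'
  tauto

lemma mem_left_of_adj (h : IsGoodDecomp G I C R) {a b : V} (ha : a ∈ I) (hab : G.Adj a b)
    (hb : b ∉ C) : b ∈ I :=
  (h.mem_left_or_mem_right hb).resolve_right fun hbR => h.2.2.2.2.2.2 a ha b hbR hab

lemma mem_right_of_adj (h : IsGoodDecomp G I C R) {a b : V} (ha : a ∈ R) (hab : G.Adj a b)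
    (hb : b ∉ C) : b ∈ R :=
  (h.mem_left_or_mem_right hb).resolve_left fun hbI => h.2.2.2.2.2.2 b hbI a ha hab.symm

lemma tripSet_subset_right (h : IsGoodDecomp G I C R) {a b c : V} (hab : G.Adj a b)
    (hbc : G.Adj b c) (hac : a ≠ c) (hC : Disjoint (TripSet (a, b, c)) C) :
    TripSet (a, b, c) ⊆ R := by
  simp only [TripSet, disjoint_insert_left, disjoint_singleton_left] at hC
  obtain ⟨haC, hbC, hcC⟩ := hC
  rcases h.mem_left_or_mem_right hbC with hbI | hbR
  · have hpair : ({a, c} : Finset V) ⊆ I.filter (G.Adj b) := by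
      simp only [insert_subset_iff, singleton_subset_iff, mem_filter]
      exact ⟨⟨h.mem_left_of_adj hbI hab.symm haC, hab.symm⟩,
        ⟨h.mem_left_of_adj hbI hbc hcC, hbc⟩⟩
    have := (card_le_card hpair).trans (h.2.2.2.2.1 b hbI)
    rw [card_pair hac] at this
    omega
  · simp only [TripSet, insert_subset_iff, singleton_subset_iff]
    exact ⟨h.mem_right_of_adj hbR hab.symm haC, hbR, h.mem_right_of_adj hbR hbc hcC⟩

lemma card_sub_card_le_card_filter (h : IsGoodDecomp G I C R) {P : Finset (V × V × V)}
    (hP : IsP3Packing G P) : P.card - C.card ≤ (P.filter fun t => TripSet t ⊆ R).card := by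
  have hmeet : ∀ t ∈ P.filter (fun t => ¬ TripSet t ⊆ R), (TripSet t ∩ C).Nonempty := by
    rintro ⟨a, b, c⟩ ht
    obtain ⟨htP, htR⟩ := mem_filter.1 ht
    obtain ⟨hab, hbc, hac⟩ := hP.1 _ htP
    rw [← not_disjoint_iff_nonempty_inter]
    exact fun hC => htR (h.tripSet_subset_right hab hbc hac hC)
  have := (hP.mono (filter_subset _ _)).card_le_of_forall_inter_nonempty hmeet
  have := card_filter_add_card_filter_not (s := P) fun t => TripSet t ⊆ R
  omega

end IsGoodDecomp

/-- for a good decomposition `(I, C, R)` of `G`, `G` has a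
P3-packing of size `k` iff `G[R]` has a P3-packing of size `k - |C|`. -/
theorem stmt7 [Fintype V] [DecidableEq V] (G : SimpleGraph V) [DecidableRel G.Adj]
    (I C R : Finset V) (h : IsGoodDecomp G I C R) (k : ℕ) :
    (∃ P : Finset (V × V × V), IsP3Packing G P ∧ P.card = k) ↔
    (∃ P' : Finset (V × V × V), IsP3Packing G P' ∧ (∀ t ∈ P', TripSet t ⊆ R) ∧
      P'.card = k - C.card) := by
  constructor
  · rintro ⟨P, hP, rfl⟩
    obtain ⟨T, hTP, hT, hTcard⟩ :=
      (hP.mono (filter_subset _ _)).exists_subset_card_eq (h.card_sub_card_le_card_filter hP)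
    exact ⟨T, hT, fun t ht => (mem_filter.1 (hTP ht)).2, hTcard⟩
  · rintro ⟨P', hP', hP'R, hP'card⟩
    obtain ⟨Q, hQ, hQIC, hQcard⟩ := h.2.2.2.2.2.1
    have hICR : Disjoint (I ∪ C) R := disjoint_union_left.2 ⟨h.2.2.1, h.2.2.2.1⟩
    have hcard : (P' ∪ Q).card = k - C.card + C.card := by
      rw [card_union_of_disjoint (disjoint_of_forall_tripSet_subset hP'R hQIC hICR.symm),
        hP'card, hQcard]
    obtain ⟨T, -, hT, hTcard⟩ :=
      (hP'.union hQ hP'R hQIC hICR.symm).exists_subset_card_eq (k := k) (by omega)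
    exact ⟨T, hT, hTcard⟩
end

section
/- Let G be a graph and A ⊆ V(G) a vertex subset such that every connected component of G[A] has at most 2 vertices. If the number of connected components of G[A] exceeds 2|N(A)| − |N'_2(A)|, where N'_2(A) is the set of vertices of N(A) adjacent to at least one size-2 component of G[A] but no size-1 component, then G admits a good decomposition (I, C, R) with ∅ ≠ I ⊆ A and C ⊆ N(A). -/
open Finset

variable {V : Type*}

lemma S8reach {G : SimpleGraph V} {A : Finset V}
    (hu : ∀ a b c, a ∈ A → b ∈ A → c ∈ A → G.Adj a b → G.Adj a c → b = c)
    {a b : (↑A : Set V)} (h : (G.induce (↑A : Set V)).Reachable a b) :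
    a.val = b.val ∨ G.Adj a.val b.val := by
  rw [SimpleGraph.reachable_iff_reflTransGen] at h
  induction h with
  | refl => exact Or.inl rfl
  | tail _ hadj ih =>
    rename_i b' c _
    have hbc : G.Adj b'.val c.val := by simpa using hadj
    rcases ih with heq | hab'
    · exact Or.inr (heq ▸ hbc)
    · exact Or.inl (hu b'.val a.val c.val b'.2 a.2 c.2 hab'.symm hbc)


def S8cl [DecidableEq V] (G : SimpleGraph V) [DecidableRel G.Adj] (A : Finset V) (a : V) :
    Finset V := A.filter (fun b => b = a ∨ G.Adj b a)

section aux
variable [Fintype V] [DecidableEq V] {G : SimpleGraph V} [DecidableRel G.Adj] {A : Finset V}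

omit [Fintype V] in
lemma S8cl_subset {a : V} : S8cl G A a ⊆ A := filter_subset _ _

omit [Fintype V] in
lemma S8mem_cl_self {a : V} (ha : a ∈ A) : a ∈ S8cl G A a := by
  simp [S8cl, ha]

omit [Fintype V] in
lemma S8mem_cl_iff {a b : V} : b ∈ S8cl G A a ↔ b ∈ A ∧ (b = a ∨ G.Adj b a) := by
  simp [S8cl]

omit [Fintype V] in
lemma S8cl_eq (hu : ∀ a b c, a ∈ A → b ∈ A → c ∈ A → G.Adj a b → G.Adj a c → b = c)
    {a b : V} (ha : a ∈ A) (hb : b ∈ A) (hab : a = b ∨ G.Adj a b) :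
    S8cl G A a = S8cl G A b := by
  rcases hab with rfl | hab
  · rfl
  · ext c
    simp only [S8mem_cl_iff]
    constructor
    · rintro ⟨hc, rfl | hca⟩
      · exact ⟨hc, Or.inr hab⟩
      · exact ⟨hc, Or.inl (hu a c b ha hc hb hca.symm hab)⟩
    · rintro ⟨hc, rfl | hcb⟩
      · exact ⟨hc, Or.inr hab.symm⟩
      · exact ⟨hc, Or.inl (hu b c a hb hc ha hcb.symm hab.symm)⟩

omit [Fintype V] in
lemma S8cl_class (hu : ∀ a b c, a ∈ A → b ∈ A → c ∈ A → G.Adj a b → G.Adj a c → b = c)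
    {a b : V} (ha : a ∈ A) (hb : b ∈ S8cl G A a) : S8cl G A b = S8cl G A a := by
  rcases S8mem_cl_iff.mp hb with ⟨hbA, h⟩
  exact S8cl_eq hu hbA ha (h.imp id (fun h' => h'))

lemma S8main (G : SimpleGraph V) [DecidableRel G.Adj] (A : Finset V)
    (hu : ∀ a b c, a ∈ A → b ∈ A → c ∈ A → G.Adj a b → G.Adj a c → b = c)
    (hcard : (A.image (S8cl G A)).card >
      2 * (NSet G A).card -
      ((NSet G A).filter (fun w =>
        (∃ a ∈ A, G.Adj w a ∧ ∃ b ∈ A, G.Adj a b) ∧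
        ¬ ∃ a ∈ A, G.Adj w a ∧ ∀ b ∈ A, ¬ G.Adj a b)).card) :
    ∃ I C R : Finset V, IsGoodDecomp G I C R ∧ I.Nonempty ∧ I ⊆ A ∧
      C ⊆ NSet G A := by
  classical
  set N : Finset V := NSet G A with hNdef
  set n2 : Finset V := N.filter (fun w =>
        (∃ a ∈ A, G.Adj w a ∧ ∃ b ∈ A, G.Adj a b) ∧
        ¬ ∃ a ∈ A, G.Adj w a ∧ ∀ b ∈ A, ¬ G.Adj a b) with hn2def
  have hNA : ∀ w ∈ N, w ∉ A := by
    intro w hw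
    simp only [hNdef, NSet, mem_filter] at hw
    exact hw.2.1
  set wt : V → ℕ := fun w => if w ∈ n2 then 1 else 2 with hwtdef
  set K : Finset (Finset V) := A.image (S8cl G A) with hKdef
  have hKsub : ∀ k ∈ K, k ⊆ A := by
    intro k hk
    obtain ⟨a, _, rfl⟩ := mem_image.mp hk
    exact S8cl_subset
  have hKA : ∀ k ∈ K, ∀ a ∈ k, S8cl G A a = k := by
    intro k hk a hak
    obtain ⟨a0, ha0, rfl⟩ := mem_image.mp hk
    exact S8cl_class hu ha0 hak
  have hKne : ∀ k ∈ K, k.Nonempty := by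
    intro k hk
    obtain ⟨a0, ha0, rfl⟩ := mem_image.mp hk
    exact ⟨a0, S8mem_cl_self ha0⟩
  have hKdisj : ∀ k1 ∈ K, ∀ k2 ∈ K, k1 ≠ k2 → Disjoint k1 k2 := by
    intro k1 h1 k2 h2 hne
    rw [disjoint_left]
    intro v hv1 hv2
    exact hne ((hKA k1 h1 v hv1).symm.trans (hKA k2 h2 v hv2))
  set nb : Finset (Finset V) → Finset V :=
    fun S => N.filter (fun w => ∃ k ∈ S, ∃ a ∈ k, G.Adj w a) with hnbdef
  set g : Finset (Finset V) → ℤ := fun S => (S.card : ℤ) - (∑ w ∈ nb S, wt w : ℕ) with hgdef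
  obtain ⟨S, hSp, hSmax⟩ := Finset.exists_max_image K.powerset g ⟨K, mem_powerset_self K⟩
  have hSK : S ⊆ K := mem_powerset.mp hSp
  have hn2N : n2 ⊆ N := filter_subset _ _
  have hn2card : n2.card ≤ N.card := card_le_card hn2N
  have hsumN : ∑ w ∈ N, wt w + n2.card = 2 * N.card := by
    rw [← Finset.sum_sdiff hn2N]
    have h1 : ∀ w ∈ N \ n2, wt w = 2 := by
      intro w hw; simp only [hwtdef]; rw [if_neg (mem_sdiff.mp hw).2]
    have h2 : ∀ w ∈ n2, wt w = 1 := by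
      intro w hw; simp only [hwtdef]; rw [if_pos hw]
    rw [Finset.sum_congr rfl h1, Finset.sum_congr rfl h2, Finset.sum_const, Finset.sum_const,
      card_sdiff_of_subset hn2N]
    simp only [smul_eq_mul, mul_one]
    omega
  have hgK : 1 ≤ g K := by
    have hsub : nb K ⊆ N := filter_subset _ _
    have h2 : ∑ w ∈ nb K, wt w ≤ ∑ w ∈ N, wt w := Finset.sum_le_sum_of_subset hsub
    show (1:ℤ) ≤ (K.card : ℤ) - (∑ w ∈ nb K, wt w : ℕ)
    omega
  have hgS : 1 ≤ g S := le_trans hgK (hSmax K (mem_powerset_self K))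
  have hSne : S.Nonempty := by
    rw [nonempty_iff_ne_empty]
    rintro rfl
    have hnbe : nb ∅ = ∅ := by simp [hnbdef]
    have : g ∅ = 0 := by simp [hgdef, hnbe]
    omega
  -- slot type for Hall's theorem
  let ι' := {p : V × Bool // p.1 ∈ nb S ∧ (p.1 ∈ n2 → p.2 = true)}
  let t : ι' → Finset (Finset V) := fun p => S.filter (fun k => ∃ a ∈ k, G.Adj p.val.1 a)
  have hhall : ∀ s : Finset ι', s.card ≤ (s.biUnion t).card := by
    intro s
    by_contra hlt
    push_neg at hlt
    set U : Finset V := s.image (fun p => p.val.1) with hUdef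
    set D : Finset (Finset V) := s.biUnion t with hDdef
    have hDS : D ⊆ S := by
      intro k hk
      obtain ⟨p, _, hp⟩ := mem_biUnion.mp hk
      exact (mem_filter.mp hp).1
    have hUnb : U ⊆ nb S := by
      intro w hw
      obtain ⟨p, _, rfl⟩ := mem_image.mp hw
      exact p.2.1
    have hadjD : ∀ w ∈ U, ∀ k ∈ S, (∃ a ∈ k, G.Adj w a) → k ∈ D := by
      intro w hw k hk hadj
      obtain ⟨p, hps, rfl⟩ := mem_image.mp hw
      exact mem_biUnion.mpr ⟨p, hps, mem_filter.mpr ⟨hk, hadj⟩⟩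
    have hcard_s : s.card ≤ ∑ w ∈ U, wt w := by
      have hinj : (s.image Subtype.val).card = s.card :=
        card_image_of_injective _ Subtype.val_injective
      have hsub : s.image Subtype.val ⊆
          U.biUnion (fun w => if w ∈ n2 then ({(w,true)} : Finset (V × Bool))
            else {(w,true),(w,false)}) := by
        intro q hq
        obtain ⟨p, hps, rfl⟩ := mem_image.mp hq
        refine mem_biUnion.mpr ⟨p.val.1, mem_image_of_mem _ hps, ?_⟩
        by_cases h : p.val.1 ∈ n2
        · rw [if_pos h]
          exact mem_singleton.mpr (Prod.ext_iff.mpr ⟨rfl, p.2.2 h⟩)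
        · rw [if_neg h]
          cases h2 : p.val.2
          · exact mem_insert.mpr (Or.inr (mem_singleton.mpr (Prod.ext_iff.mpr ⟨rfl, h2⟩)))
          · exact mem_insert.mpr (Or.inl (Prod.ext_iff.mpr ⟨rfl, h2⟩))
      have hble := card_biUnion_le (s := U)
        (t := fun w => if w ∈ n2 then ({(w,true)} : Finset (V × Bool)) else {(w,true),(w,false)})
      have hfib : ∀ w ∈ U, (if w ∈ n2 then ({(w,true)} : Finset (V × Bool))
          else {(w,true),(w,false)}).card = wt w := by
        intro w _
        by_cases h : w ∈ n2 <;> simp [h, hwtdef]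
      calc s.card = (s.image Subtype.val).card := hinj.symm
        _ ≤ (U.biUnion _).card := card_le_card hsub
        _ ≤ ∑ w ∈ U, (if w ∈ n2 then ({(w,true)} : Finset (V × Bool))
              else {(w,true),(w,false)}).card := hble
        _ = ∑ w ∈ U, wt w := Finset.sum_congr rfl hfib
    have hnb' : nb (S \ D) ⊆ (nb S) \ U := by
      intro w hw
      simp only [hnbdef, mem_filter] at hw
      obtain ⟨hwN, k, hkSD, a, hak, hadj⟩ := hw
      have hkS : k ∈ S := (mem_sdiff.mp hkSD).1
      refine mem_sdiff.mpr ⟨mem_filter.mpr ⟨hwN, k, hkS, a, hak, hadj⟩, ?_⟩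
      intro hwU
      exact (mem_sdiff.mp hkSD).2 (hadjD w hwU k hkS ⟨a, hak, hadj⟩)
    have hsum2 : ∑ w ∈ nb (S \ D), wt w + ∑ w ∈ U, wt w ≤ ∑ w ∈ nb S, wt w := by
      have ha := Finset.sum_le_sum_of_subset hnb' (f := wt)
      have hb := Finset.sum_sdiff hUnb (f := wt)
      omega
    have hcle : D.card ≤ S.card := card_le_card hDS
    have hgD : g S + 1 ≤ g (S \ D) := by
      have h1 : (S \ D).card = S.card - D.card := card_sdiff_of_subset hDS
      show (S.card : ℤ) - (∑ w ∈ nb S, wt w : ℕ) + 1 ≤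
        ((S \ D).card : ℤ) - (∑ w ∈ nb (S \ D), wt w : ℕ)
      omega
    have := hSmax (S \ D) (mem_powerset.mpr ((sdiff_subset).trans hSK))
    omega
  obtain ⟨f, hfinj, hft⟩ := (Finset.all_card_le_biUnion_card_iff_exists_injective t).mp hhall
  have hftS : ∀ p : ι', f p ∈ S := fun p => (mem_filter.mp (hft p)).1
  have hftadj : ∀ p : ι', ∃ a ∈ f p, G.Adj p.val.1 a := fun p => (mem_filter.mp (hft p)).2
  have hfK : ∀ p : ι', f p ∈ K := fun p => hSK (hftS p)
  set C : Finset V := nb S with hCdef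
  set I : Finset V := S.biUnion (fun k => k) with hIdef
  set R : Finset V := univ \ (I ∪ C) with hRdef
  have hIA : I ⊆ A := by
    intro v hv
    obtain ⟨k, hkS, hvk⟩ := mem_biUnion.mp hv
    exact hKsub k (hSK hkS) hvk
  have hCN : C ⊆ N := filter_subset _ _
  have hCnA : ∀ w ∈ C, w ∉ A := fun w hw => hNA w (hCN hw)
  have hIedge : ∀ a ∈ I, ∀ b, G.Adj a b → b ∈ I ∨ b ∈ C := by
    intro a ha b hadj
    obtain ⟨k, hkS, hak⟩ := mem_biUnion.mp ha
    have haA : a ∈ A := hKsub k (hSK hkS) hak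
    by_cases hbA : b ∈ A
    · left
      have hcl : S8cl G A a = k := hKA _ (hSK hkS) a hak
      refine mem_biUnion.mpr ⟨k, hkS, ?_⟩
      rw [← hcl]
      exact S8mem_cl_iff.mpr ⟨hbA, Or.inr hadj.symm⟩
    · right
      refine mem_filter.mpr ⟨?_, k, hkS, a, hak, hadj.symm⟩
      simp only [hNdef, NSet, mem_filter, mem_univ, true_and]
      exact ⟨hbA, a, haA, hadj.symm⟩
  have hpath : ∀ w ∈ C, ∃ trp : V × V × V,
      (G.Adj trp.1 trp.2.1 ∧ G.Adj trp.2.1 trp.2.2 ∧ trp.1 ≠ trp.2.2) ∧ w ∈ TripSet trp ∧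
      ∀ v ∈ TripSet trp, v = w ∨ ∃ p : ι', p.val.1 = w ∧ v ∈ f p := by
    intro w hw
    by_cases hwn2 : w ∈ n2
    · set p : ι' := ⟨(w, true), hw, fun _ => rfl⟩ with hpdef
      obtain ⟨y, hyk, hwy⟩ := hftadj p
      have hyA : y ∈ A := hKsub _ (hfK p) hyk
      have h2 := (mem_filter.mp hwn2).2.2
      push_neg at h2
      obtain ⟨x, hxA, hyx⟩ := h2 y hyA hwy
      have hxk : x ∈ f p := by
        have hcl : S8cl G A y = f p := hKA _ (hfK p) y hyk
        rw [← hcl]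
        exact S8mem_cl_iff.mpr ⟨hxA, Or.inr hyx.symm⟩
      refine ⟨(x, y, w), ⟨hyx.symm, hwy.symm, ?_⟩, ?_, ?_⟩
      · intro hxw
        exact hNA w (hCN hw) ((show x = w from hxw) ▸ hxA)
      · simp [TripSet]
      · intro v hv
        simp only [TripSet, mem_insert, mem_singleton] at hv
        rcases hv with rfl | rfl | rfl
        · exact Or.inr ⟨p, rfl, hxk⟩
        · exact Or.inr ⟨p, rfl, hyk⟩
        · exact Or.inl rfl
    · set p1 : ι' := ⟨(w, true), hw, fun _ => rfl⟩ with hp1def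
      set p2 : ι' := ⟨(w, false), hw, fun h => absurd h hwn2⟩ with hp2def
      obtain ⟨x, hxk, hwx⟩ := hftadj p1
      obtain ⟨y, hyk, hwy⟩ := hftadj p2
      have hne : f p1 ≠ f p2 := by
        intro h
        have h' : p1 = p2 := hfinj h
        exact absurd (congrArg Subtype.val h') (by simp [hp1def, hp2def])
      have hxy : x ≠ y := by
        intro h
        exact (disjoint_left.mp (hKdisj _ (hfK p1) _ (hfK p2) hne) hxk) (h ▸ hyk)
      refine ⟨(x, w, y), ⟨hwx.symm, hwy, hxy⟩, ?_, ?_⟩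
      · simp [TripSet]
      · intro v hv
        simp only [TripSet, mem_insert, mem_singleton] at hv
        rcases hv with rfl | rfl | rfl
        · exact Or.inr ⟨p1, rfl, hxk⟩
        · exact Or.inl rfl
        · exact Or.inr ⟨p2, rfl, hyk⟩
  choose trp htr1 htr2 htr3 using hpath
  have hdisj12 : ∀ w1, ∀ (h1 : w1 ∈ C), ∀ w2, ∀ (h2 : w2 ∈ C), w1 ≠ w2 →
      Disjoint (TripSet (trp w1 h1)) (TripSet (trp w2 h2)) := by
    intro w1 h1 w2 h2 hne
    rw [disjoint_left]
    intro v hv1 hv2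
    rcases htr3 w1 h1 v hv1 with rfl | ⟨p, hp1, hpv⟩
    · rcases htr3 w2 h2 v hv2 with h | ⟨q, hq1, hqv⟩
      · exact hne h
      · exact hCnA _ h1 (hKsub _ (hfK q) hqv)
    · rcases htr3 w2 h2 v hv2 with rfl | ⟨q, hq1, hqv⟩
      · exact hCnA _ h2 (hKsub _ (hfK p) hpv)
      · have hpq : p ≠ q := by
          intro h
          rw [h] at hp1
          exact hne (hp1.symm.trans hq1)
        have hfne : f p ≠ f q := fun h => hpq (hfinj h)
        exact (disjoint_left.mp (hKdisj _ (hfK p) _ (hfK q) hfne) hpv) hqv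
  set P : Finset (V × V × V) := C.attach.image (fun w => trp w.val w.prop) with hPdef
  have hPmem : ∀ t' ∈ P, ∃ w : {x // x ∈ C}, trp w.val w.prop = t' := by
    intro t' ht'
    obtain ⟨w, _, h⟩ := mem_image.mp ht'
    exact ⟨w, h⟩
  have hPinj : Function.Injective (fun w : {x // x ∈ C} => trp w.val w.prop) := by
    intro w1 w2 h
    by_contra hne'
    have hvne : w1.val ≠ w2.val := fun hv => hne' (Subtype.ext hv)
    have h' : trp w1.val w1.prop = trp w2.val w2.prop := h
    have h2 := htr2 w2.val w2.prop
    rw [← h'] at h2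
    rcases htr3 w1.val w1.prop _ h2 with heq | ⟨p, _, hpv⟩
    · exact hvne heq.symm
    · exact hCnA _ w2.prop (hKsub _ (hfK p) hpv)
  refine ⟨I, C, R, ⟨?_, ?_, ?_, ?_, ?_, ⟨P, ⟨?_, ?_⟩, ?_, ?_⟩, ?_⟩, ?_, ?_, ?_⟩
  · rw [hRdef]
    exact union_sdiff_of_subset (subset_univ _)
  · exact disjoint_left.mpr (fun v hvI hvC => hCnA v hvC (hIA hvI))
  · exact disjoint_left.mpr (fun v hvI hvR => ((mem_sdiff.mp hvR).2 (mem_union_left _ hvI)).elim)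
  · exact disjoint_left.mpr (fun v hvC hvR => ((mem_sdiff.mp hvR).2 (mem_union_right _ hvC)).elim)
  · intro a ha
    apply card_le_one.mpr
    intro b hb c hc
    rw [mem_filter] at hb hc
    exact hu a b c (hIA ha) (hIA hb.1) (hIA hc.1) hb.2 hc.2
  · intro t' ht'
    obtain ⟨w, rfl⟩ := hPmem t' ht'
    exact htr1 w.val w.prop
  · intro t' ht' s' hs' hne'
    obtain ⟨w1, rfl⟩ := hPmem t' ht'
    obtain ⟨w2, rfl⟩ := hPmem s' hs'
    have hvne : w1.val ≠ w2.val := by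
      intro hv
      have : w1 = w2 := Subtype.ext hv
      subst this
      exact hne' rfl
    exact hdisj12 w1.val w1.prop w2.val w2.prop hvne
  · intro t' ht'
    obtain ⟨w, rfl⟩ := hPmem t' ht'
    intro v hv
    rcases htr3 w.val w.prop v hv with rfl | ⟨p, _, hpv⟩
    · exact mem_union_right _ w.prop
    · exact mem_union_left _ (mem_biUnion.mpr ⟨f p, hftS p, hpv⟩)
  · rw [hPdef, card_image_of_injective _ hPinj, card_attach]
  · intro a ha b hb hadj
    rcases hIedge a ha b hadj with h | h
    · exact (mem_sdiff.mp hb).2 (mem_union_left _ h)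
    · exact (mem_sdiff.mp hb).2 (mem_union_right _ h)
  · obtain ⟨k, hk⟩ := hSne
    obtain ⟨a, hak⟩ := hKne k (hSK hk)
    exact ⟨a, mem_biUnion.mpr ⟨k, hk, hak⟩⟩
  · exact hIA
  · exact hCN



end aux

/-- if each component of `G[A]` has at most 2 vertices and the
number of components of `G[A]` exceeds `2|N(A)| - |N'₂(A)|`, then `G` has a
good decomposition `(I, C, R)` with `∅ ≠ I ⊆ A` and `C ⊆ N(A)`. -/
theorem stmt8 [Fintype V] [DecidableEq V] (G : SimpleGraph V) [DecidableRel G.Adj]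
    (A : Finset V)
    (hsmall : ∀ c : (G.induce (↑A : Set V)).ConnectedComponent, c.supp.ncard ≤ 2)
    (hcond : Nat.card ((G.induce (↑A : Set V)).ConnectedComponent) >
      2 * (NSet G A).card -
      ((NSet G A).filter (fun w =>
        (∃ a ∈ A, G.Adj w a ∧ ∃ b ∈ A, G.Adj a b) ∧
        ¬ ∃ a ∈ A, G.Adj w a ∧ ∀ b ∈ A, ¬ G.Adj a b)).card) :
    ∃ I C R : Finset V, IsGoodDecomp G I C R ∧ I.Nonempty ∧ I ⊆ A ∧
      C ⊆ NSet G A := by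
  classical
  -- step 1 : hu
  have hu : ∀ a b c, a ∈ A → b ∈ A → c ∈ A → G.Adj a b → G.Adj a c → b = c := by
    intro a b c ha hb hc hab hac
    by_contra hbc
    set a' : (↑A : Set V) := ⟨a, by simpa using ha⟩
    set b' : (↑A : Set V) := ⟨b, by simpa using hb⟩
    set c' : (↑A : Set V) := ⟨c, by simpa using hc⟩
    set c0 := (G.induce (↑A : Set V)).connectedComponentMk a' with hc0
    have hmb : b' ∈ c0.supp := by
      rw [SimpleGraph.ConnectedComponent.mem_supp_iff, hc0]
      exact SimpleGraph.ConnectedComponent.sound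
        ((SimpleGraph.Adj.reachable (by simpa using hab.symm : (G.induce (↑A : Set V)).Adj b' a')))
    have hmc : c' ∈ c0.supp := by
      rw [SimpleGraph.ConnectedComponent.mem_supp_iff, hc0]
      exact SimpleGraph.ConnectedComponent.sound
        ((SimpleGraph.Adj.reachable (by simpa using hac.symm : (G.induce (↑A : Set V)).Adj c' a')))
    have hma : a' ∈ c0.supp := by
      rw [SimpleGraph.ConnectedComponent.mem_supp_iff, hc0]
    have hsub : ({a', b', c'} : Set (↑A : Set V)) ⊆ c0.supp := by
      intro x hx
      rcases hx with rfl | rfl | rfl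
      · exact hma
      · exact hmb
      · exact hmc
    have h3 : ({a', b', c'} : Set (↑A : Set V)).ncard = 3 := by
      refine Set.ncard_eq_three.mpr ⟨a', b', c', ?_, ?_, ?_, rfl⟩
      · exact fun h => G.ne_of_adj hab (congrArg Subtype.val h)
      · exact fun h => G.ne_of_adj hac (congrArg Subtype.val h)
      · exact fun h => hbc (congrArg Subtype.val h)
    have := Set.ncard_le_ncard hsub (Set.toFinite _)
    have h2 := hsmall c0
    omega
  -- step 2 : count
  have hcount : Nat.card ((G.induce (↑A : Set V)).ConnectedComponent)
      = (A.image (S8cl G A)).card := by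
    have hkey : ∀ u v : (↑A : Set V),
        (G.induce (↑A : Set V)).connectedComponentMk u =
          (G.induce (↑A : Set V)).connectedComponentMk v ↔
          S8cl G A u.val = S8cl G A v.val := by
      intro u v
      constructor
      · intro h
        have hr : (G.induce (↑A : Set V)).Reachable u v :=
          (SimpleGraph.ConnectedComponent.eq).mp h
        rcases S8reach hu hr with heq | hadj
        · rw [heq]
        · ext c
          simp only [S8cl, mem_filter]
          constructor
          · rintro ⟨hcA, rfl | hca⟩
            · exact ⟨hcA, Or.inr hadj⟩
            · exact ⟨hcA, Or.inl (hu u.val c v.val (by simpa using u.2) hcA (by simpa using v.2) hca.symm hadj)⟩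
          · rintro ⟨hcA, rfl | hcb⟩
            · exact ⟨hcA, Or.inr hadj.symm⟩
            · exact ⟨hcA, Or.inl (hu v.val c u.val (by simpa using v.2) hcA (by simpa using u.2) hcb.symm hadj.symm)⟩
      · intro h
        have huA : u.val ∈ A := by simpa using u.2
        have huu : u.val ∈ S8cl G A u.val := by simp [S8cl, huA]
        rw [h] at huu
        simp only [S8cl, mem_filter] at huu
        rcases huu.2 with heq | hadj
        · exact congrArg _ (Subtype.ext heq)
        · exact SimpleGraph.ConnectedComponent.sound
            (SimpleGraph.Adj.reachable (by simpa using hadj : (G.induce (↑A : Set V)).Adj u v))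
    -- bijection
    set φ : (G.induce (↑A : Set V)).ConnectedComponent → Finset V :=
      fun c => S8cl G A (c.exists_rep.choose).val with hφ
    have hφmk : ∀ u : (↑A : Set V),
        φ ((G.induce (↑A : Set V)).connectedComponentMk u) = S8cl G A u.val := by
      intro u
      have hspec := ((G.induce (↑A : Set V)).connectedComponentMk u).exists_rep.choose_spec
      exact (hkey _ u).mp hspec
    have hinj : Function.Injective φ := by
      intro c1 c2 h
      obtain ⟨u1, hu1⟩ := c1.exists_rep
      obtain ⟨u2, hu2⟩ := c2.exists_rep
      rw [← hu1, ← hu2] at h ⊢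
      change φ ((G.induce (↑A : Set V)).connectedComponentMk u1) =
        φ ((G.induce (↑A : Set V)).connectedComponentMk u2) at h
      rw [hφmk u1, hφmk u2] at h
      exact (hkey u1 u2).mpr h
    have himg : Finset.univ.image φ = A.image (S8cl G A) := by
      ext k
      simp only [mem_image, mem_univ, true_and]
      constructor
      · rintro ⟨c, rfl⟩
        obtain ⟨u, hu2⟩ := c.exists_rep
        rw [← hu2]
        change ∃ a ∈ A, S8cl G A a = φ ((G.induce (↑A : Set V)).connectedComponentMk u)
        rw [hφmk u]
        exact ⟨u.val, by simpa using u.2, rfl⟩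
      · rintro ⟨a, ha, rfl⟩
        exact ⟨(G.induce (↑A : Set V)).connectedComponentMk ⟨a, by simpa using ha⟩,
          hφmk _⟩
    calc Nat.card ((G.induce (↑A : Set V)).ConnectedComponent)
        = (Finset.univ : Finset ((G.induce (↑A : Set V)).ConnectedComponent)).card := by
          rw [Nat.card_eq_fintype_card, Finset.card_univ]
      _ = (Finset.univ.image φ).card := (Finset.card_image_of_injective _ hinj).symm
      _ = (A.image (S8cl G A)).card := by rw [himg]
  rw [hcount] at hcond
  exact S8main G A hu hcond
end

section
/- Let G be a graph and A ⊆ V(G) such that every connected component of G[A] has at most 2 vertices. Let Comp_2(G[A]) denote the number of size-2 components of G[A] and N_2(A) the set of vertices of N(A) adjacent to a vertex in some size-2 component of G[A]. If Comp_2(G[A]) > |N_2(A)|, then G admits a good decomposition (I, C, R) with ∅ ≠ I ⊆ A and C ⊆ N(A). -/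
/-!
Call a set `S` of size-2 components of `G[A]` deficient if fewer vertices outside `A` are
adjacent to `S` than `S` has members. The size-2 components together are deficient, since all
their outside neighbours lie in `N₂(A)`. If Hall's condition for matching the neighbourhood
`N(S)` of a deficient `S` into `S` fails at some `W ⊆ N(S)`, deleting from `S` the components
seen by `W` leaves a smaller deficient set. So some nonempty deficient `S` satisfies it, and each
`w ∈ N(S)` is matched to its own component `{x, y} ∈ S`; the paths `w x y` are vertex-disjoint.
Then `I = ⋃ S` and `C = N(S)` give a good decomposition: `G[I]` is a matching, and every
neighbour of `I` outside `I` is in `C`.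
-/

open Finset

variable {V : Type*}

theorem Finset.exists_subset_biUnion_matching_of_card_biUnion_lt {ι α : Type*}
    [DecidableEq ι] [DecidableEq α] (N : ι → Finset α) (T : Finset ι)
    (hT : #(T.biUnion N) < #T) :
    ∃ S ⊆ T, S.Nonempty ∧ ∃ f : S.biUnion N → ι,
      Function.Injective f ∧ ∀ w, f w ∈ S ∧ ↑w ∈ N (f w) := by
  induction T using Finset.strongInduction with
  | H T ih =>
  set M : T.biUnion N → Finset ι := fun w => T.filter (↑w ∈ N ·)
  by_cases hall : ∀ s, #s ≤ #(s.biUnion M)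
  · obtain ⟨f, hf, hfT⟩ := (all_card_le_biUnion_card_iff_exists_injective M).1 hall
    refine ⟨T, subset_rfl, card_pos.1 (by omega), f, hf, fun w => ?_⟩
    simpa [M] using hfT w
  push Not at hall
  obtain ⟨s, hs⟩ := hall
  set B := s.biUnion M
  set W := s.map (Function.Embedding.subtype _)
  have hBT : B ⊆ T := biUnion_subset.2 fun _ _ => filter_subset _ _
  have hWN : W ⊆ T.biUnion N := fun _ hw => by obtain ⟨u, -, rfl⟩ := mem_map.1 hw; exact u.2
  have hB : B.Nonempty := by
    obtain ⟨u, hu⟩ := card_pos.1 (by omega : 0 < #s)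
    obtain ⟨c, hcT, huc⟩ := mem_biUnion.1 u.2
    exact ⟨c, mem_biUnion.2 ⟨u, hu, mem_filter.2 ⟨hcT, huc⟩⟩⟩
  have hsub : (T \ B).biUnion N ⊆ T.biUnion N \ W := by
    intro w hw
    obtain ⟨c, hc, hwc⟩ := mem_biUnion.1 hw
    obtain ⟨hcT, hcB⟩ := mem_sdiff.1 hc
    refine mem_sdiff.2 ⟨mem_biUnion.2 ⟨c, hcT, hwc⟩, fun hwW => hcB ?_⟩
    obtain ⟨u, hu, rfl⟩ := mem_map.1 hwW
    exact mem_biUnion.2 ⟨u, hu, mem_filter.2 ⟨hcT, hwc⟩⟩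
  -- `T \ B` loses the `#B` members of `B` but at least `#s > #B` neighbours
  have hdef : #((T \ B).biUnion N) < #(T \ B) := by
    have h₁ := card_le_card hsub
    have h₂ := card_le_card hWN
    have h₃ := card_le_card hBT
    rw [card_sdiff_of_subset hWN] at h₁
    rw [card_sdiff_of_subset hBT]
    simp only [W, card_map] at h₁ h₂
    omega
  obtain ⟨S, hS, rest⟩ := ih _ (sdiff_ssubset hBT hB) hdef
  exact ⟨S, hS.trans sdiff_subset, rest⟩

namespace SimpleGraph.ConnectedComponent

variable {W : Type*} {H : SimpleGraph W} {c : H.ConnectedComponent} {x y z : W}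

theorem exists_adj_of_one_lt_ncard_supp (hc : 1 < c.supp.ncard) (hx : x ∈ c.supp) :
    ∃ y, H.Adj x y := by
  obtain ⟨y, hy, hxy⟩ := Set.exists_ne_of_one_lt_ncard hc x
  obtain ⟨p⟩ := ConnectedComponent.exact (hx.trans hy.symm)
  exact ⟨p.snd, p.adj_snd (Walk.not_nil_of_ne hxy.symm)⟩

theorem eq_of_adj_of_adj_of_ncard_supp_le_two [Finite W] (hc : c.supp.ncard ≤ 2)
    (hx : x ∈ c.supp) (hy : H.Adj x y) (hz : H.Adj x z) : y = z := by
  by_contra hyz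
  have hsub : {x, y, z} ⊆ c.supp := by
    rintro v (rfl | rfl | rfl)
    · exact hx
    · exact (connectedComponentMk_eq_of_adj hy).symm.trans hx
    · exact (connectedComponentMk_eq_of_adj hz).symm.trans hx
  have := Set.ncard_le_ncard hsub
  rw [Set.ncard_eq_three.2 ⟨x, y, z, hy.ne, hz.ne, hyz, rfl⟩] at this
  omega

end SimpleGraph.ConnectedComponent

section Decomposition

variable [DecidableEq V] {G : SimpleGraph V} {I C : Finset V}

theorem exists_p3Packing_of_paths (hIC : Disjoint I C) (x y : C → V)
    (hxyI : ∀ w, {x w, y w} ⊆ I) (hwx : ∀ w : C, G.Adj w (x w))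
    (hxy : ∀ w, G.Adj (x w) (y w))
    (hdisj : Pairwise fun w w' => Disjoint ({x w, y w} : Finset V) {x w', y w'}) :
    ∃ P : Finset (V × V × V), IsP3Packing G P ∧ (∀ t ∈ P, TripSet t ⊆ I ∪ C) ∧
      #P = #C := by
  have hxI w : x w ∈ I := hxyI w (mem_insert_self _ _)
  have hyI w : y w ∈ I := hxyI w (mem_insert_of_mem (mem_singleton_self _))
  have hnotI (w : C) : (w : V) ∉ I := disjoint_right.1 hIC w.2
  have hpath : Function.Injective fun w : C => ((w : V), x w, y w) :=
    fun w w' h => Subtype.ext (congrArg Prod.fst h)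
  refine ⟨univ.image fun w : C => ((w : V), x w, y w), ⟨?_, ?_⟩, ?_, ?_⟩
  · simp only [mem_image, mem_univ, true_and]
    rintro _ ⟨w, rfl⟩
    exact ⟨hwx w, hxy w, fun h : (w : V) = y w => hnotI w (h ▸ hyI w)⟩
  · simp only [mem_image, mem_univ, true_and]
    rintro _ ⟨w, rfl⟩ _ ⟨w', rfl⟩ hne
    have hww' : w ≠ w' := fun h => hne (h ▸ rfl)
    have hTrip (v : C) : TripSet ((v : V), x v, y v) = insert (v : V) {x v, y v} := rfl
    rw [hTrip, hTrip, disjoint_left]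
    rintro z hz hz'
    rcases mem_insert.1 hz with rfl | hz <;> rcases mem_insert.1 hz' with h | hz'
    · exact hww' (Subtype.ext h)
    · exact hnotI w (hxyI w' hz')
    · exact hnotI w' (h ▸ hxyI w hz)
    · exact disjoint_left.1 (hdisj hww') hz hz'
  · simp only [mem_image, mem_univ, true_and]
    rintro _ ⟨w, rfl⟩
    simp only [TripSet, insert_subset_iff, singleton_subset_iff, mem_union]
    exact ⟨Or.inr w.2, Or.inl (hxI w), Or.inl (hyI w)⟩
  · rw [card_image_of_injective _ hpath, card_univ, Fintype.card_coe]

theorem isGoodDecomp_sdiff_union [Fintype V] [DecidableRel G.Adj] (hIC : Disjoint I C)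
    (hdeg : ∀ a ∈ I, #(I.filter (G.Adj a)) ≤ 1)
    (hnbr : ∀ a ∈ I, ∀ b, G.Adj a b → b ∈ I ∪ C)
    (hP : ∃ P : Finset (V × V × V), IsP3Packing G P ∧ (∀ t ∈ P, TripSet t ⊆ I ∪ C) ∧
      #P = #C) :
    IsGoodDecomp G I C (univ \ (I ∪ C)) :=
  ⟨union_sdiff_of_subset (subset_univ _), hIC,
    disjoint_sdiff.mono_left subset_union_left, disjoint_sdiff.mono_left subset_union_right,
    hdeg, hP, fun a ha b hb hab => (mem_sdiff.1 hb).2 (hnbr a ha b hab)⟩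

end Decomposition

section Components

variable [Fintype V] (G : SimpleGraph V) (A : Finset V)

open Classical in
noncomputable def compVerts (S : Finset (G.induce (A : Set V)).ConnectedComponent) : Finset V :=
  univ.filter fun v => ∃ h : v ∈ A, (G.induce (A : Set V)).connectedComponentMk ⟨v, h⟩ ∈ S

def compNbr [DecidableEq V] [DecidableRel G.Adj] (c : (G.induce (A : Set V)).ConnectedComponent) :
    Finset V :=
  (NSet G A).filter fun w => ∃ x ∈ c.supp, G.Adj w x

variable {G A} {S T : Finset (G.induce (A : Set V)).ConnectedComponent}

theorem mem_compVerts {v : V} :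
    v ∈ compVerts G A S ↔
      ∃ h : v ∈ A, (G.induce (A : Set V)).connectedComponentMk ⟨v, h⟩ ∈ S := by
  simp [compVerts]

theorem coe_mem_compVerts (x : (A : Set V)) :
    (x : V) ∈ compVerts G A S ↔ (G.induce (A : Set V)).connectedComponentMk x ∈ S := by
  simp [mem_compVerts]

theorem compVerts_subset : compVerts G A S ⊆ A :=
  fun _ hv => (mem_compVerts.1 hv).1

theorem compVerts_nonempty (hS : S.Nonempty) : (compVerts G A S).Nonempty := by
  obtain ⟨c, hc⟩ := hS
  induction c using SimpleGraph.ConnectedComponent.ind with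
  | h x => exact ⟨x, (coe_mem_compVerts x).2 hc⟩

theorem compVerts_mono (hST : S ⊆ T) : compVerts G A S ⊆ compVerts G A T :=
  fun _ hv => by
    obtain ⟨h, hS⟩ := mem_compVerts.1 hv
    exact mem_compVerts.2 ⟨h, hST hS⟩

theorem disjoint_compVerts (hST : Disjoint S T) :
    Disjoint (compVerts G A S) (compVerts G A T) :=
  disjoint_left.2 fun _ hS hT =>
    disjoint_left.1 hST (mem_compVerts.1 hS).2 ((coe_mem_compVerts _).1 hT)

theorem card_filter_adj_compVerts_le_one [DecidableRel G.Adj] (hS : ∀ c ∈ S, c.supp.ncard ≤ 2)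
    {a : V} (ha : a ∈ compVerts G A S) : #((compVerts G A S).filter (G.Adj a)) ≤ 1 := by
  obtain ⟨haA, haS⟩ := mem_compVerts.1 ha
  refine card_le_one.2 fun b hb b' hb' => ?_
  obtain ⟨hbA, -⟩ := mem_compVerts.1 (mem_filter.1 hb).1
  obtain ⟨hbA', -⟩ := mem_compVerts.1 (mem_filter.1 hb').1
  have hab : (G.induce (A : Set V)).Adj ⟨a, haA⟩ ⟨b, hbA⟩ := (mem_filter.1 hb).2
  have hab' : (G.induce (A : Set V)).Adj ⟨a, haA⟩ ⟨b', hbA'⟩ := (mem_filter.1 hb').2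
  exact congrArg Subtype.val
    (SimpleGraph.ConnectedComponent.eq_of_adj_of_adj_of_ncard_supp_le_two (hS _ haS) rfl
      hab hab')

variable [DecidableEq V] [DecidableRel G.Adj]

theorem disjoint_compVerts_biUnion_compNbr :
    Disjoint (compVerts G A S) (T.biUnion (compNbr G A)) :=
  disjoint_left.2 fun _ hv hw => by
    obtain ⟨c, -, hw⟩ := mem_biUnion.1 hw
    exact (mem_filter.1 (mem_filter.1 hw).1).2.1 (compVerts_subset hv)

theorem mem_compVerts_union_biUnion_compNbr_of_adj {a b : V} (ha : a ∈ compVerts G A S)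
    (hab : G.Adj a b) : b ∈ compVerts G A S ∪ S.biUnion (compNbr G A) := by
  obtain ⟨haA, haS⟩ := mem_compVerts.1 ha
  by_cases hbA : b ∈ A
  · refine mem_union_left _ ((coe_mem_compVerts ⟨b, hbA⟩).2 ?_)
    rwa [SimpleGraph.ConnectedComponent.connectedComponentMk_eq_of_adj
      (show (G.induce (A : Set V)).Adj ⟨b, hbA⟩ ⟨a, haA⟩ from hab.symm)]
  · refine mem_union_right _
      (mem_biUnion.2 ⟨_, haS, mem_filter.2 ⟨?_, ⟨a, haA⟩, rfl, hab.symm⟩⟩)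
    simpa [NSet, hbA] using ⟨a, haA, hab.symm⟩

theorem compNbr_subset_of_ncard_supp_eq_two {c : (G.induce (A : Set V)).ConnectedComponent}
    (hc : c.supp.ncard = 2) :
    compNbr G A c ⊆
      (NSet G A).filter fun w => ∃ a ∈ A, G.Adj w a ∧ ∃ b ∈ A, G.Adj a b := by
  intro w hw
  obtain ⟨hwN, x, hx, hwx⟩ := mem_filter.1 hw
  obtain ⟨y, hxy⟩ :=
    SimpleGraph.ConnectedComponent.exists_adj_of_one_lt_ncard_supp (by omega) hx
  exact mem_filter.2 ⟨hwN, x, x.2, hwx, y, y.2, hxy⟩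

theorem exists_path_of_mem_compNbr {c : (G.induce (A : Set V)).ConnectedComponent}
    (hc : 1 < c.supp.ncard) {w : V} (hw : w ∈ compNbr G A c) :
    ∃ x y, {x, y} ⊆ compVerts G A {c} ∧ G.Adj w x ∧ G.Adj x y := by
  obtain ⟨-, x, hx, hwx⟩ := mem_filter.1 hw
  obtain ⟨y, hxy⟩ := SimpleGraph.ConnectedComponent.exists_adj_of_one_lt_ncard_supp hc hx
  refine ⟨x, y, insert_subset_iff.2 ⟨?_, singleton_subset_iff.2 ?_⟩, hwx, hxy⟩
  · exact (coe_mem_compVerts x).2 (mem_singleton.2 hx)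
  · exact (coe_mem_compVerts y).2 (mem_singleton.2
      ((SimpleGraph.ConnectedComponent.connectedComponentMk_eq_of_adj hxy).symm.trans hx))

end Components

/-- if each component of `G[A]` has at most 2 vertices and the
number of size-2 components of `G[A]` exceeds `|N₂(A)|`, then `G` has a good
decomposition `(I, C, R)` with `∅ ≠ I ⊆ A` and `C ⊆ N(A)`. -/
theorem stmt9 [Fintype V] [DecidableEq V] (G : SimpleGraph V) [DecidableRel G.Adj]
    (A : Finset V)
    (hsmall : ∀ c : (G.induce (↑A : Set V)).ConnectedComponent, c.supp.ncard ≤ 2)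
    (hcond : Nat.card {c : (G.induce (↑A : Set V)).ConnectedComponent //
        c.supp.ncard = 2} >
      ((NSet G A).filter (fun w => ∃ a ∈ A, G.Adj w a ∧ ∃ b ∈ A, G.Adj a b)).card) :
    ∃ I C R : Finset V, IsGoodDecomp G I C R ∧ I.Nonempty ∧ I ⊆ A ∧
      C ⊆ NSet G A := by
  classical
  set S₂ := univ.filter fun c : (G.induce (A : Set V)).ConnectedComponent => c.supp.ncard = 2
  have hdef : #(S₂.biUnion (compNbr G A)) < #S₂ := calc
    _ ≤ _ := card_le_card (biUnion_subset.2 fun c hc =>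
      compNbr_subset_of_ncard_supp_eq_two (mem_filter.1 hc).2)
    _ < _ := hcond
    _ = #S₂ := by rw [Nat.card_eq_fintype_card, Fintype.card_subtype]
  obtain ⟨S, hSS₂, hS, f, hf, hfS⟩ :=
    exists_subset_biUnion_matching_of_card_biUnion_lt (compNbr G A) S₂ hdef
  have hS₂ : ∀ c ∈ S, c.supp.ncard = 2 := fun c hc => (mem_filter.1 (hSS₂ hc)).2
  choose x y hxyf hwx hxy using fun w =>
    exists_path_of_mem_compNbr (by rw [hS₂ _ (hfS w).1]; norm_num) (hfS w).2
  have hIC := disjoint_compVerts_biUnion_compNbr (S := S) (T := S)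
  refine ⟨compVerts G A S, S.biUnion (compNbr G A), _, isGoodDecomp_sdiff_union hIC
    (fun _ => card_filter_adj_compVerts_le_one fun c _ => hsmall c)
    (fun _ ha _ => mem_compVerts_union_biUnion_compNbr_of_adj ha)
    (exists_p3Packing_of_paths hIC x y
      (fun w => (hxyf w).trans (compVerts_mono (singleton_subset_iff.2 (hfS w).1))) hwx hxy
      fun w w' h =>
        (disjoint_compVerts (disjoint_singleton.2 (hf.ne h))).mono (hxyf w) (hxyf w')),
    compVerts_nonempty hS, compVerts_subset, biUnion_subset.2 fun c _ => filter_subset _ _⟩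
end

section
/- Let G be a graph with a maximal P3-packing S containing fewer than k paths, and let A = V(G) \ V(S). If |A| > 12k, then the number of connected components of G[A] exceeds 2|N(A)|. -/
/-!
Maximality of `S` means that `G` has no 3-vertex path avoiding `V(S)`, so every vertex of
`A = V \ V(S)` has at most one neighbour in `A` and the components of `G[A]` have at most two
vertices; hence `G[A]` has at least `|A| / 2 > 6k` components. On the other hand
`N(A) ⊆ V(S)`, so `|N(A)| ≤ 3|S| < 3k`.
-/

open Finset

variable {V : Type*}

namespace SimpleGraph

variable {H : SimpleGraph V}

theorem Reachable.eq_or_adj_of_subsingleton_neighborSet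
    (hH : ∀ v, (H.neighborSet v).Subsingleton) {x y : V} (hxy : H.Reachable x y) :
    x = y ∨ H.Adj x y := by
  obtain ⟨w⟩ := hxy
  induction w with
  | nil => exact Or.inl rfl
  | @cons u m y hum _ ih =>
    rcases ih with rfl | hmy
    · exact Or.inr hum
    · exact Or.inl (hH m hum.symm hmy)

theorem card_le_two_mul_card_connectedComponent [Fintype V]
    (hH : ∀ v, (H.neighborSet v).Subsingleton) :
    Fintype.card V ≤ 2 * Nat.card H.ConnectedComponent := by
  classical
  have hfiber : ∀ c ∈ univ.image H.connectedComponentMk,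
      {x ∈ (univ : Finset V) | H.connectedComponentMk x = c}.card ≤ 2 := by
    intro c _
    by_contra! hgt
    obtain ⟨x, hx, y, hy, z, hz, hxy, hxz, hyz⟩ := two_lt_card.1 hgt
    simp only [mem_filter, mem_univ, true_and] at hx hy hz
    have adj_of_ne {a b : V} (ha : H.connectedComponentMk a = c)
        (hb : H.connectedComponentMk b = c) (hab : a ≠ b) : H.Adj a b :=
      ((ConnectedComponent.exact (ha.trans hb.symm)).eq_or_adj_of_subsingleton_neighborSet
        hH).resolve_left hab
    exact hxz (hH y (adj_of_ne hx hy hxy).symm (adj_of_ne hy hz hyz))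
  calc Fintype.card V = (univ : Finset V).card := rfl
    _ ≤ 2 * (univ.image H.connectedComponentMk).card := card_le_mul_card_image _ 2 hfiber
    _ ≤ 2 * Nat.card H.ConnectedComponent := by
      have := Fintype.ofFinite H.ConnectedComponent
      rw [Nat.card_eq_fintype_card]
      exact Nat.mul_le_mul_left 2 (card_le_univ _)

end SimpleGraph

theorem card_tripSet_le [DecidableEq V] (t : V × V × V) : (TripSet t).card ≤ 3 :=
  card_le_three

theorem card_biUnion_tripSet_le [DecidableEq V] (S : Finset (V × V × V)) :
    (S.biUnion TripSet).card ≤ 3 * S.card := by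
  rw [Nat.mul_comm]
  exact card_biUnion_le_card_mul S TripSet 3 fun t _ => card_tripSet_le t

theorem nSet_subset_compl [Fintype V] [DecidableEq V] (G : SimpleGraph V) [DecidableRel G.Adj]
    (A : Finset V) : NSet G A ⊆ Aᶜ := by
  intro w hw
  exact mem_compl.2 (mem_filter.1 hw).2.1

namespace IsP3Packing

variable [DecidableEq V] {G : SimpleGraph V} {S : Finset (V × V × V)}

theorem insert (hS : IsP3Packing G S) {t : V × V × V}
    (ht : G.Adj t.1 t.2.1 ∧ G.Adj t.2.1 t.2.2 ∧ t.1 ≠ t.2.2)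
    (hdisj : ∀ s ∈ S, Disjoint (TripSet t) (TripSet s)) :
    IsP3Packing G (insert t S) := by
  refine ⟨fun s hs => ?_, fun s₁ h₁ s₂ h₂ hne => ?_⟩
  · rcases mem_insert.1 hs with rfl | hs
    · exact ht
    · exact hS.1 s hs
  · rcases mem_insert.1 h₁ with rfl | hs₁ <;> rcases mem_insert.1 h₂ with rfl | hs₂
    · exact absurd rfl hne
    · exact hdisj s₂ hs₂
    · exact (hdisj s₁ hs₁).symm
    · exact hS.2 s₁ hs₁ s₂ hs₂ hne

theorem eq_of_adj_of_adj_of_maximal (hS : IsP3Packing G S)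
    (hmax : ∀ S' : Finset (V × V × V), IsP3Packing G S' → S ⊆ S' → S' = S)
    {a b c : V} (ha : a ∉ S.biUnion TripSet) (hb : b ∉ S.biUnion TripSet)
    (hc : c ∉ S.biUnion TripSet) (hab : G.Adj a b) (hbc : G.Adj b c) : a = c := by
  by_contra hac
  have hdisj : ∀ s ∈ S, Disjoint (TripSet (a, b, c)) (TripSet s) := by
    intro s hs
    simp only [TripSet, disjoint_insert_left, disjoint_singleton_left]
    refine ⟨?_, ?_, ?_⟩ <;> intro hmem
    exacts [ha (mem_biUnion.2 ⟨s, hs, hmem⟩), hb (mem_biUnion.2 ⟨s, hs, hmem⟩),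
      hc (mem_biUnion.2 ⟨s, hs, hmem⟩)]
  have hmem : (a, b, c) ∈ S :=
    hmax _ (hS.insert ⟨hab, hbc, hac⟩ hdisj) (subset_insert _ _) ▸ mem_insert_self _ _
  exact ha (mem_biUnion.2 ⟨_, hmem, by simp [TripSet]⟩)

theorem subsingleton_neighborSet_induce_of_maximal [Fintype V] (hS : IsP3Packing G S)
    (hmax : ∀ S' : Finset (V × V × V), IsP3Packing G S' → S ⊆ S' → S' = S)
    (v : ↥(↑(univ \ S.biUnion TripSet) : Set V)) :
    ((G.induce ↑(univ \ S.biUnion TripSet)).neighborSet v).Subsingleton := by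
  intro x hx y hy
  have outside (u : ↥(↑(univ \ S.biUnion TripSet) : Set V)) : (u : V) ∉ S.biUnion TripSet :=
    (mem_sdiff.1 u.2).2
  exact Subtype.ext <| hS.eq_of_adj_of_adj_of_maximal hmax (outside x) (outside v) (outside y)
    (G.adj_symm hx) hy

end IsP3Packing

/-- for a maximal P3-packing `S` of fewer than `k` paths and
`A = V \ V(S)`, if `|A| > 12k` then the number of components of `G[A]`
exceeds `2|N(A)|`. -/
theorem stmt11 [Fintype V] [DecidableEq V] (G : SimpleGraph V) [DecidableRel G.Adj]
    (k : ℕ) (S : Finset (V × V × V)) (hS : IsP3Packing G S)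
    (hmax : ∀ S' : Finset (V × V × V), IsP3Packing G S' → S ⊆ S' → S' = S)
    (hk : S.card < k)
    (A : Finset V) (hA : A = Finset.univ \ S.biUnion TripSet)
    (hbig : A.card > 12 * k) :
    Nat.card ((G.induce (↑A : Set V)).ConnectedComponent) > 2 * (NSet G A).card := by
  subst hA
  have hcomponents := SimpleGraph.card_le_two_mul_card_connectedComponent
    (hS.subsingleton_neighborSet_induce_of_maximal hmax)
  simp only [coe_sort_coe, Fintype.card_coe] at hcomponents
  have hneighbours : (NSet G (univ \ S.biUnion TripSet)).card ≤ 3 * S.card := by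
    refine (card_le_card ?_).trans (card_biUnion_tripSet_le S)
    simpa [← compl_eq_univ_sdiff] using nSet_subset_compl G (univ \ S.biUnion TripSet)
  omega
end

section
/- Let G be a graph with a minimum 3-path vertex cover of size at most k, admitting a vertex partition (A, B, Z) where B is the vertex set of a P3-packing P, no vertex of A is adjacent to a vertex of Z, and |Z| ≤ 5·γ(G[Z]) where γ(G[Z]) is the minimum size of a 3-path vertex cover of G[Z]. Then the number of 3-paths in P is at most k − |Z|/5. -/
open Finset

variable {V : Type*}

/-
A 3-path vertex cover `C` of `G` meets every path of the packing `P`, and these paths are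
disjoint, so `C` has at least `|P|` vertices in `B = V(P)`. Its trace on `Z` covers `G[Z]`,
so by the hypothesis on `Z` it has at least `|Z| / 5` vertices in `Z`. As `B` and `Z` are
disjoint, `|P| + |Z| / 5 ≤ |C| ≤ k`.
-/

namespace IsP3VC

theorem isP3VCOn_inter {G : SimpleGraph V} [DecidableEq V] {C : Finset V} (hC : IsP3VC G C)
    (S : Finset V) : IsP3VCOn G S (C ∩ S) := by
  intro a b c ha hb hc hab hbc hac
  simp only [mem_inter]
  rcases hC a b c hab hbc hac with h | h | h <;> simp [*]

theorem inter_tripSet_nonempty {G : SimpleGraph V} [DecidableEq V] {C : Finset V}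
    (hC : IsP3VC G C) {t : V × V × V} (ht : G.Adj t.1 t.2.1 ∧ G.Adj t.2.1 t.2.2 ∧ t.1 ≠ t.2.2) :
    (C ∩ TripSet t).Nonempty := by
  obtain ⟨h₁, h₂, h₃⟩ := ht
  rcases hC _ _ _ h₁ h₂ h₃ with h | h | h <;> exact ⟨_, mem_inter.2 ⟨h, by simp [TripSet]⟩⟩

theorem card_packing_le_card_inter {G : SimpleGraph V} [DecidableEq V] {C : Finset V}
    (hC : IsP3VC G C) {P : Finset (V × V × V)} (hP : IsP3Packing G P) :
    #P ≤ #(C ∩ P.biUnion TripSet) := by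
  rw [inter_biUnion]
  refine card_le_card_biUnion ?_ fun t ht ↦ hC.inter_tripSet_nonempty (hP.1 t ht)
  exact fun t ht s hs hts ↦
    (hP.2 t ht s hs hts).mono inter_subset_right inter_subset_right

end IsP3VC

theorem stmt13_general [DecidableEq V] (G : SimpleGraph V)
    (k : ℕ) (B Z : Finset V)
    (hBZ : Disjoint B Z)
    (P : Finset (V × V × V)) (hP : IsP3Packing G P)
    (hB : B = P.biUnion TripSet)
    (hgamma : ∀ D : Finset V, D ⊆ Z → IsP3VCOn G Z D → Z.card ≤ 5 * D.card)
    (hcover : ∃ C : Finset V, IsP3VC G C ∧ C.card ≤ k) :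
    5 * P.card + Z.card ≤ 5 * k := by
  obtain ⟨C, hC, hCk⟩ := hcover
  have hPB : #P ≤ #(C ∩ B) := hB ▸ hC.card_packing_le_card_inter hP
  have hZ : #Z ≤ 5 * #(C ∩ Z) := hgamma _ inter_subset_right (hC.isP3VCOn_inter Z)
  have hBZC : #(C ∩ B) + #(C ∩ Z) ≤ #C := by
    rw [← card_union_of_disjoint (hBZ.mono inter_subset_right inter_subset_right),
      ← inter_union_distrib_left]
    exact card_le_card inter_subset_left
  omega

/-- given a partition `(A, B, Z)` with `B = V(P)` for a
P3-packing `P`, no edges between `A` and `Z`, and `|Z| ≤ 5·γ(G[Z])`, if `G`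
has a 3-path vertex cover of size at most `k` then `|P| ≤ k - |Z|/5`
(equivalently `5|P| + |Z| ≤ 5k`). -/
theorem stmt13 [Fintype V] [DecidableEq V] (G : SimpleGraph V) [DecidableRel G.Adj]
    (k : ℕ) (A B Z : Finset V)
    (hunion : A ∪ B ∪ Z = Finset.univ)
    (hAB : Disjoint A B) (hAZ : Disjoint A Z) (hBZ : Disjoint B Z)
    (P : Finset (V × V × V)) (hP : IsP3Packing G P)
    (hB : B = P.biUnion TripSet)
    (hnoadj : ∀ a ∈ A, ∀ z ∈ Z, ¬ G.Adj a z)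
    (hgamma : ∀ D : Finset V, D ⊆ Z → IsP3VCOn G Z D → Z.card ≤ 5 * D.card)
    (hcover : ∃ C : Finset V, IsP3VC G C ∧ C.card ≤ k) :
    5 * P.card + Z.card ≤ 5 * k :=
  stmt13_general G k B Z hBZ P hP hB hgamma hcover
end

section
/- Let G be a graph with vertex partition (A, B, Z) satisfying the Basic and Extended Conditions of a crucial partition, with P the associated P3-packing on B. Let B* be the set of free vertices in good 3-paths of P_L and A* the set of A_0-vertices adjacent to 3-paths in P^1. Then A' = (A ∪ B*) \ A* induces a subgraph of maximum degree at most 1. -/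
open Finset

variable {V : Type*}

section Crucial

variable [Fintype V] [DecidableEq V] (G : SimpleGraph V) [DecidableRel G.Adj]
  (A : Finset V) (P : Finset (V × V × V))

/-- `w` is adjacent to the 3-path `L` -/
def AdjTo (w : V) (L : V × V × V) : Prop := ∃ x ∈ TripSet L, G.Adj w x

instance (w : V) (L : V × V × V) : Decidable (AdjTo G w L) := by
  unfold AdjTo; infer_instance

/-- `A₀`: the degree-0 vertices of `G[A]` -/
def A0set : Finset V := A.filter (fun a => ∀ b ∈ A, ¬ G.Adj a b)

/-- `A(L)`: the `A`-vertices in components of `G[A]` adjacent to `L` -/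
def ALset (L : V × V × V) : Finset V :=
  A.filter (fun a => AdjTo G a L ∨ ∃ b ∈ A, G.Adj a b ∧ AdjTo G b L)

/-- the number of vertices of `L` adjacent to some `A`-vertex -/
def nAdjVerts (L : V × V × V) : ℕ :=
  ((TripSet L).filter (fun x => ∃ a ∈ A, G.Adj x a)).card

/-- `P¹`: 3-paths `L` of `P` with `|A(L)| = 1` -/
def P1sup : Finset (V × V × V) := P.filter (fun L => (ALset G A L).card = 1)

/-- `P₀`: 3-paths of `P` with no vertex adjacent to `A` -/
def P0set : Finset (V × V × V) := P.filter (fun L => nAdjVerts G A L = 0)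

/-- `P_M`: 3-paths of `P₁ \ P¹` whose middle vertex is adjacent to `A` -/
def PMset : Finset (V × V × V) :=
  P.filter (fun L => (ALset G A L).card ≠ 1 ∧ nAdjVerts G A L = 1 ∧
    ∃ a ∈ A, G.Adj L.2.1 a)

/-- `P_L`: 3-paths of `P₁ \ P¹` with `|A(L)| ≥ 2` and an ending vertex
adjacent to `A` -/
def PLset : Finset (V × V × V) :=
  P.filter (fun L => 2 ≤ (ALset G A L).card ∧ nAdjVerts G A L = 1 ∧
    ((∃ a ∈ A, G.Adj L.1 a) ∨ (∃ a ∈ A, G.Adj L.2.2 a)))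

/-- `x` is a free vertex of the 3-path `L` -/
def Free (x : V) (L : V × V × V) : Prop :=
  x ∈ TripSet L ∧ ∀ a ∈ A, ¬ G.Adj x a

instance (x : V) (L : V × V × V) : Decidable (Free G A x L) := by
  unfold Free; infer_instance

/-- bad 3-paths of `P₀`: at least two vertices adjacent to free vertices of
3-paths of `P_L` -/
def badP0set : Finset (V × V × V) :=
  (P0set G A P).filter (fun L0 =>
    2 ≤ ((TripSet L0).filter (fun y =>
      ∃ L ∈ PLset G A P, ∃ x, Free G A x L ∧ G.Adj y x)).card)

/-- good 3-paths of `P_L`: not adjacent to a bad 3-path of `P₀` -/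
def goodPLset : Finset (V × V × V) :=
  (PLset G A P).filter (fun L =>
    ¬ ∃ L0 ∈ badP0set G A P, ∃ y ∈ TripSet L0, ∃ x ∈ TripSet L, G.Adj y x)

/-- `B*`: the free vertices in good 3-paths of `P_L` -/
def Bstar : Finset V :=
  Finset.univ.filter (fun x => ∃ L ∈ goodPLset G A P, Free G A x L)

/-- `A*`: the `A₀`-vertices adjacent to 3-paths of `P¹` -/
def Astar : Finset V :=
  (A0set G A).filter (fun a => ∃ L ∈ P1sup G A P, AdjTo G a L)

end Crucial

/-! A vertex of `A` has no neighbour in `B*`, since `B*` consists of free vertices, so its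
neighbours in `A'` are its at most one neighbour in `G[A]`. A vertex `x ∈ B*` is a free vertex of
a path `L ∈ P_L`; by (E3) its neighbours in `B*` are free vertices of the same `L`, and `L` has at
most two free vertices because exactly one of its vertices sees `A`. -/

section Crucial

variable [Fintype V] [DecidableEq V] {G : SimpleGraph V} [DecidableRel G.Adj]
  {A : Finset V} {P : Finset (V × V × V)}

theorem card_free_le_two_of_nAdjVerts_eq_one {L : V × V × V} (h : nAdjVerts G A L = 1) :
    #{x ∈ TripSet L | ∀ a ∈ A, ¬ G.Adj x a} ≤ 2 := by
  have hsplit := card_filter_add_card_filter_not (s := TripSet L) (fun x => ∃ a ∈ A, G.Adj x a)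
  simp only [not_exists, not_and] at hsplit
  have : #(TripSet L) ≤ 3 := card_le_three
  unfold nAdjVerts at h
  omega

theorem not_adj_of_mem_Bstar {a x : V} (ha : a ∈ A) (hx : x ∈ Bstar G A P) : ¬ G.Adj a x := by
  obtain ⟨-, -, -, -, hfree⟩ := mem_filter.1 hx
  exact fun hax => hfree a ha hax.symm

theorem card_adj_le_one_of_mem_A (hB1 : ∀ a ∈ A, #{b ∈ A | G.Adj a b} ≤ 1)
    {a : V} (ha : a ∈ A) :
    #{y ∈ (A ∪ Bstar G A P) \ Astar G A P | G.Adj a y} ≤ 1 := by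
  refine (card_le_card fun y hy => ?_).trans (hB1 a ha)
  simp only [mem_filter, mem_sdiff, mem_union] at hy ⊢
  obtain ⟨⟨hyA | hyB, -⟩, hay⟩ := hy
  · exact ⟨hyA, hay⟩
  · exact absurd hay (not_adj_of_mem_Bstar ha hyB)

theorem mem_free_erase_of_adj_of_mem_Bstar
    (hE3 : ∀ L ∈ PLset G A P, ∀ L' ∈ PLset G A P, L ≠ L' →
      ∀ x, Free G A x L → ∀ y, Free G A y L' → ¬ G.Adj x y)
    {L : V × V × V} (hL : L ∈ PLset G A P) {x y : V} (hx : Free G A x L)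
    (hy : y ∈ A ∪ Bstar G A P) (hxy : G.Adj x y) :
    y ∈ ({z ∈ TripSet L | ∀ a ∈ A, ¬ G.Adj z a}).erase x := by
  rcases mem_union.1 hy with hyA | hyB
  · exact absurd hxy (hx.2 y hyA)
  · obtain ⟨-, L', hL', hy'⟩ := mem_filter.1 hyB
    have hLL' : L = L' := by
      by_contra hne
      exact hE3 L hL L' (mem_filter.1 hL').1 hne x hx y hy' hxy
    subst hLL'
    exact mem_erase.2 ⟨hxy.ne.symm, mem_filter.2 hy'⟩

theorem card_adj_le_one_of_mem_Bstar
    (hE3 : ∀ L ∈ PLset G A P, ∀ L' ∈ PLset G A P, L ≠ L' →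
      ∀ x, Free G A x L → ∀ y, Free G A y L' → ¬ G.Adj x y)
    {x : V} (hx : x ∈ Bstar G A P) :
    #{y ∈ (A ∪ Bstar G A P) \ Astar G A P | G.Adj x y} ≤ 1 := by
  obtain ⟨-, L, hL, hxL⟩ := mem_filter.1 hx
  have hLPL : L ∈ PLset G A P := (mem_filter.1 hL).1
  have hfree : x ∈ {z ∈ TripSet L | ∀ a ∈ A, ¬ G.Adj z a} := mem_filter.2 hxL
  calc #{y ∈ (A ∪ Bstar G A P) \ Astar G A P | G.Adj x y}
      ≤ #(({z ∈ TripSet L | ∀ a ∈ A, ¬ G.Adj z a}).erase x) :=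
        card_le_card fun y hy =>
          mem_free_erase_of_adj_of_mem_Bstar hE3 hLPL hxL
            (mem_sdiff.1 (mem_filter.1 hy).1).1 (mem_filter.1 hy).2
    _ ≤ 1 := by
        rw [card_erase_of_mem hfree]
        have := card_free_le_two_of_nAdjVerts_eq_one (mem_filter.1 hLPL).2.2.1
        omega

end Crucial

theorem stmt15_general [Fintype V] [DecidableEq V] (G : SimpleGraph V) [DecidableRel G.Adj]
    (A : Finset V) (P : Finset (V × V × V))
    -- (B1): `G[A]` has maximum degree at most 1
    (hB1 : ∀ a ∈ A, (A.filter (fun b => G.Adj a b)).card ≤ 1)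
    -- (E3): free vertices of distinct 3-paths of `P_L` are nonadjacent
    (hE3 : ∀ L ∈ PLset G A P, ∀ L' ∈ PLset G A P, L ≠ L' →
      ∀ x, Free G A x L → ∀ y, Free G A y L' → ¬ G.Adj x y) :
    ∀ x ∈ (A ∪ Bstar G A P) \ Astar G A P,
      (((A ∪ Bstar G A P) \ Astar G A P).filter (fun y => G.Adj x y)).card ≤ 1 := by
  intro x hx
  rcases mem_union.1 (mem_sdiff.1 hx).1 with hxA | hxB
  · exact card_adj_le_one_of_mem_A hB1 hxA
  · exact card_adj_le_one_of_mem_Bstar hE3 hxB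

/-- for a crucial partition `(A, B, Z)` with packing `P`, the set
`A' = (A ∪ B*) \ A*` induces a subgraph of maximum degree at most 1. -/
theorem stmt15 [Fintype V] [DecidableEq V] (G : SimpleGraph V) [DecidableRel G.Adj]
    (A B Z : Finset V) (P : Finset (V × V × V))
    (hunion : A ∪ B ∪ Z = Finset.univ)
    (hAB : Disjoint A B) (hAZ : Disjoint A Z) (hBZ : Disjoint B Z)
    -- (B1): `G[A]` has maximum degree at most 1
    (hB1 : ∀ a ∈ A, (A.filter (fun b => G.Adj a b)).card ≤ 1)
    -- (B2): `B` is the vertex set of the P3-packing `P`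
    (hB2 : IsP3Packing G P ∧ B = P.biUnion TripSet)
    -- (B3): no vertex of `A` is adjacent to a vertex of `Z`
    (hB3 : ∀ a ∈ A, ∀ z ∈ Z, ¬ G.Adj a z)
    -- (B4): `|Z| ≤ 5·γ(G[Z])`
    (hB4 : ∀ D : Finset V, D ⊆ Z → IsP3VCOn G Z D → Z.card ≤ 5 * D.card)
    -- (E1): each 3-path of `P \ P¹` has at most one vertex adjacent to `A`
    (hE1 : ∀ L ∈ P, (ALset G A L).card ≠ 1 → nAdjVerts G A L ≤ 1)
    -- (E2): no 3-path of `P_M` is adjacent to both `A₀`- and `A₁`-vertices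
    (hE2 : ∀ L ∈ PMset G A P,
      ¬ ((∃ a ∈ A0set G A, AdjTo G a L) ∧ (∃ a ∈ A \ A0set G A, AdjTo G a L)))
    -- (E3): free vertices of distinct 3-paths of `P_L` are nonadjacent
    (hE3 : ∀ L ∈ PLset G A P, ∀ L' ∈ PLset G A P, L ≠ L' →
      ∀ x, Free G A x L → ∀ y, Free G A y L' → ¬ G.Adj x y)
    -- (E4): no free vertex of a `P_L`-path is adjacent to a free vertex of a `P_M`-path
    (hE4 : ∀ L ∈ PLset G A P, ∀ L' ∈ PMset G A P,
      ∀ x, Free G A x L → ∀ y, Free G A y L' → ¬ G.Adj x y)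
    -- (E5): each 3-path of `P¹` has at most one vertex adjacent to a free vertex of a `P_L`-path
    (hE5 : ∀ L ∈ P1sup G A P,
      ((TripSet L).filter (fun y =>
        ∃ L' ∈ PLset G A P, ∃ x, Free G A x L' ∧ G.Adj y x)).card ≤ 1)
    -- (E6): each bad 3-path of `P₀` sees free vertices of only one `P_L`-path
    (hE6 : ∀ L0 ∈ badP0set G A P, ∀ L ∈ PLset G A P, ∀ L' ∈ PLset G A P,
      (∃ y ∈ TripSet L0, ∃ x, Free G A x L ∧ G.Adj y x) →
      (∃ y ∈ TripSet L0, ∃ x, Free G A x L' ∧ G.Adj y x) → L = L')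
    -- (E7): no free vertex of a `P_L`-path is adjacent to a vertex of `Z`
    (hE7 : ∀ L ∈ PLset G A P, ∀ x, Free G A x L → ∀ z ∈ Z, ¬ G.Adj x z) :
    ∀ x ∈ (A ∪ Bstar G A P) \ Astar G A P,
      (((A ∪ Bstar G A P) \ Astar G A P).filter (fun y => G.Adj x y)).card ≤ 1 :=
  stmt15_general G A P hB1 hE3
end

section
/- Let G be a graph with no vertex of degree ≤ 1 and no vertex dominated by another vertex, and suppose no vertex of degree ≥ 4 has a satellite. Then for every vertex v with d(v) ≥ 4 and every neighbor u of v, u has at least two neighbors at distance exactly 2 from v, and hence |N({v, u})| ≥ d(v) + 1. -/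
open Finset

variable {V : Type*}

/-! The neighbours of `u` outside `N[v]` are exactly `N[u] \ N[v]`. This set is nonempty because
`u` is not dominated by `v`, and it is not a singleton because its element would be a satellite of
`v`. Together with the `d(v) - 1` other neighbours of `v` it lies in `N({v, u})`. -/

section

variable [Fintype V] [DecidableEq V] {G : SimpleGraph V} [DecidableRel G.Adj] {u v : V}

theorem filter_notMem_CN_eq_sdiff (hvu : G.Adj v u) :
    (G.neighborFinset u).filter (fun s => s ∉ CN G v) = CN G u \ CN G v := by
  ext w
  simp only [mem_filter, mem_sdiff, CN, mem_insert, SimpleGraph.mem_neighborFinset]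
  constructor
  · rintro ⟨huw, hw⟩
    exact ⟨Or.inr huw, hw⟩
  · rintro ⟨rfl | huw, hw⟩
    · exact absurd (Or.inr hvu) hw
    · exact ⟨huw, hw⟩

theorem disjoint_erase_neighborFinset_sdiff_CN (u : V) :
    Disjoint ((G.neighborFinset v).erase u) (CN G u \ CN G v) :=
  disjoint_sdiff.mono_left ((erase_subset u _).trans (subset_insert v _))

theorem erase_neighborFinset_union_sdiff_CN_subset_NSet (hvu : G.Adj v u) :
    (G.neighborFinset v).erase u ∪ (CN G u \ CN G v) ⊆ NSet G {v, u} := by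
  intro w hw
  simp only [NSet, mem_filter, mem_univ, true_and, mem_insert, mem_singleton]
  rcases mem_union.mp hw with hw | hw
  · obtain ⟨hwu, hvw⟩ := mem_erase.mp hw
    rw [SimpleGraph.mem_neighborFinset] at hvw
    refine ⟨?_, v, Or.inl rfl, hvw.symm⟩
    rintro (rfl | rfl)
    · exact G.irrefl hvw
    · exact hwu rfl
  · simp only [mem_sdiff, CN, mem_insert, SimpleGraph.mem_neighborFinset] at hw
    obtain ⟨rfl | huw, hwv⟩ := hw
    · exact absurd (Or.inr hvu) hwv
    · refine ⟨?_, u, Or.inr rfl, huw.symm⟩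
      rintro (rfl | rfl)
      · exact hwv (Or.inl rfl)
      · exact G.irrefl huw

theorem degree_sub_one_add_card_sdiff_CN_le_card_NSet (hvu : G.Adj v u) :
    G.degree v - 1 + (CN G u \ CN G v).card ≤ (NSet G {v, u}).card := by
  have hcard : ((G.neighborFinset v).erase u).card = G.degree v - 1 :=
    card_erase_of_mem ((G.mem_neighborFinset v u).mpr hvu)
  rw [← hcard, ← card_union_of_disjoint (disjoint_erase_neighborFinset_sdiff_CN u)]
  exact card_le_card (erase_neighborFinset_union_sdiff_CN_subset_NSet hvu)

end

theorem stmt19_general [Fintype V] [DecidableEq V] (G : SimpleGraph V) [DecidableRel G.Adj]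
    (hnodom : ∀ u v : V, G.Adj u v → ¬ CN G u ⊆ CN G v)
    (hnosat : ∀ v : V, 4 ≤ G.degree v →
      ¬ ∃ p s : V, G.Adj v p ∧ CN G p \ CN G v = {s}) :
    ∀ v : V, 4 ≤ G.degree v → ∀ u : V, G.Adj v u →
      2 ≤ ((G.neighborFinset u).filter (fun s => s ∉ CN G v)).card ∧
      G.degree v + 1 ≤ (NSet G {v, u}).card := by
  intro v hv u hvu
  rw [filter_notMem_CN_eq_sdiff hvu]
  have htwo : 2 ≤ (CN G u \ CN G v).card := by
    rcases (sdiff_nonempty.mpr (hnodom u v hvu.symm)).exists_eq_singleton_or_nontrivial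
      with ⟨s, hs⟩ | hnontriv
    · exact absurd ⟨u, s, hvu, hs⟩ (hnosat v hv)
    · exact one_lt_card_iff_nontrivial.mpr hnontriv
  have hNSet := degree_sub_one_add_card_sdiff_CN_le_card_NSet hvu
  exact ⟨htwo, by omega⟩

/-- if `G` has minimum degree at least 2, no dominated vertex,
and no vertex of degree ≥ 4 with a satellite, then every vertex `v` of degree
≥ 4 and every neighbor `u` of `v` satisfy: `u` has at least two neighbors at
distance exactly 2 from `v`, hence `|N({v, u})| ≥ d(v) + 1`. -/
theorem stmt19 [Fintype V] [DecidableEq V] (G : SimpleGraph V) [DecidableRel G.Adj]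
    (hmin : ∀ v : V, 2 ≤ G.degree v)
    (hnodom : ∀ u v : V, G.Adj u v → ¬ CN G u ⊆ CN G v)
    (hnosat : ∀ v : V, 4 ≤ G.degree v →
      ¬ ∃ p s : V, G.Adj v p ∧ CN G p \ CN G v = {s}) :
    ∀ v : V, 4 ≤ G.degree v → ∀ u : V, G.Adj v u →
      2 ≤ ((G.neighborFinset u).filter (fun s => s ∉ CN G v)).card ∧
      G.degree v + 1 ≤ (NSet G {v, u}).card :=
  stmt19_general G hnodom hnosat
end
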